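/- arXiv:1908.06811 — 8 statements merged into one kernel-verified Lean document; each statement's English description precedes it below -/
import Mathlib

section
/- Let k be a field of characteristic ≠ 2, let ℓ/k be a quadratic field extension, and let c = (c₁, c₂, c₃) ∈ k³. Then the 4-dimensional k-algebra A(ℓ, c) is a division algebra over k if and only if the triple c is ℓ-admissible, i.e., q_c(x, y) = 0 holds only for (x, y) = (0, 0). -/
/-!
Left multiplication by `p = (x, y)` is the `ℓ`-linear map with matrix `[[x, N y], [y, M x]]`,
where `N y = c₂ y + c₃ ȳ` and `M x = (1 - c₁) x + c₁ x̄`, and its determinant is `q_c(x, y)`.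
Multiplying `p q = 0` by the adjugate gives `q_c(p) • q = 0`, and when `q_c(p) = 0` a nonzero
column of the adjugate is a `q ≠ 0` with `p q = 0`. So `c` is admissible exactly when `A(ℓ, c)`
has no zero divisors, which for a finite-dimensional algebra means that all left and right
multiplications by nonzero elements are bijective.
-/

open Module Function

variable {k ℓ : Type}

/-- The function `q_c : ℓ × ℓ → ℓ` associated with a triple `c = (c₁, c₂, c₃) ∈ k³`. -/
def qc [Field k] [Field ℓ] [Algebra k ℓ] (σ : ℓ ≃ₐ[k] ℓ) (c : k × k × k) (x y : ℓ) : ℓ :=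
  (1 - algebraMap k ℓ c.1) * x ^ 2 + algebraMap k ℓ c.1 * (x * σ x)
    - algebraMap k ℓ c.2.1 * y ^ 2 - algebraMap k ℓ c.2.2 * (y * σ y)

/-- A triple `c ∈ k³` is `ℓ`-admissible if `q_c` is anisotropic. -/
def IsAdmissibleTriple [Field k] [Field ℓ] [Algebra k ℓ] (σ : ℓ ≃ₐ[k] ℓ)
    (c : k × k × k) : Prop :=
  ∀ x y : ℓ, qc σ c x y = 0 → x = 0 ∧ y = 0

/-- The multiplication of the 4-dimensional `k`-algebra `A(ℓ, c)` on the underlying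
`k`-vector space `ℓ × ℓ`. -/
def Amul [Field k] [Field ℓ] [Algebra k ℓ] (σ : ℓ ≃ₐ[k] ℓ) (c : k × k × k)
    (p q : ℓ × ℓ) : ℓ × ℓ :=
  (p.1 * q.1 + (algebraMap k ℓ c.2.1 * p.2 + algebraMap k ℓ c.2.2 * σ p.2) * q.2,
   p.2 * q.1 + ((1 - algebraMap k ℓ c.1) * p.1 + algebraMap k ℓ c.1 * σ p.1) * q.2)

theorem LinearMap.forall_bijective_and_bijective_flip_iff {K V : Type*} [Field K]
    [AddCommGroup V] [Module K V] [FiniteDimensional K V] (B : V →ₗ[K] V →ₗ[K] V) :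
    (∀ a : V, a ≠ 0 → Bijective (B a) ∧ Bijective (B.flip a)) ↔
      ∀ a b : V, B a b = 0 → a = 0 ∨ b = 0 := by
  constructor
  · intro hbij a b hab
    rw [or_iff_not_imp_left]
    intro ha
    exact (hbij a ha).1.injective (by rw [hab, map_zero])
  · intro hzero a ha
    have bijective_of_eq_zero : ∀ f : V →ₗ[K] V, (∀ b, f b = 0 → b = 0) → Bijective f :=
      fun f hf => ⟨(injective_iff_map_eq_zero f).2 hf,
        LinearMap.injective_iff_surjective.1 ((injective_iff_map_eq_zero f).2 hf)⟩
    exact ⟨bijective_of_eq_zero _ fun b hb => (hzero a b hb).resolve_left ha,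
      bijective_of_eq_zero _ fun b hb => (hzero b a hb).resolve_right ha⟩

section AlgebraA

variable [Field k] [Field ℓ] [Algebra k ℓ] (σ : ℓ ≃ₐ[k] ℓ) (c : k × k × k)

def amulₗ : (ℓ × ℓ) →ₗ[k] (ℓ × ℓ) →ₗ[k] (ℓ × ℓ) :=
  LinearMap.mk₂ k (Amul σ c)
    (fun p p' q => by ext <;> simp only [Amul, Prod.fst_add, Prod.snd_add, map_add] <;> ring)
    (fun r p q => by
      ext <;> simp only [Amul, Prod.smul_fst, Prod.smul_snd, map_smul] <;>
        simp only [Algebra.smul_def] <;> ring)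
    (fun p q q' => by ext <;> simp only [Amul, Prod.fst_add, Prod.snd_add] <;> ring)
    (fun r p q => by
      ext <;> simp only [Amul, Prod.smul_fst, Prod.smul_snd] <;>
        simp only [Algebra.smul_def] <;> ring)

theorem qc_smul_eq_zero_of_amul_eq_zero {p q : ℓ × ℓ} (h : Amul σ c p q = 0) :
    qc σ c p.1 p.2 • q = 0 := by
  obtain ⟨h₁, h₂⟩ := Prod.ext_iff.1 h
  simp only [Amul, Prod.fst_zero, Prod.snd_zero] at h₁ h₂
  ext <;> simp only [Prod.smul_fst, Prod.smul_snd, smul_eq_mul, qc, Prod.fst_zero, Prod.snd_zero]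
  · linear_combination ((1 - algebraMap k ℓ c.1) * p.1 + algebraMap k ℓ c.1 * σ p.1) * h₁
      - (algebraMap k ℓ c.2.1 * p.2 + algebraMap k ℓ c.2.2 * σ p.2) * h₂
  · linear_combination p.1 * h₂ - p.2 * h₁

theorem exists_amul_eq_zero_of_qc_eq_zero {p : ℓ × ℓ} (hp : p ≠ 0) (hq : qc σ c p.1 p.2 = 0) :
    ∃ q ≠ 0, Amul σ c p q = 0 := by
  obtain ⟨x, y⟩ := p
  simp only [qc] at hq
  by_cases hM : ((1 - algebraMap k ℓ c.1) * x + algebraMap k ℓ c.1 * σ x, -y) = 0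
  · have hy : y = 0 := neg_eq_zero.1 (Prod.ext_iff.1 hM).2
    have hx : x ≠ 0 := fun hx => hp (by rw [hx, hy, Prod.mk_zero_zero])
    refine ⟨(algebraMap k ℓ c.2.1 * y + algebraMap k ℓ c.2.2 * σ y, -x), by simp [hx], ?_⟩
    ext
    · simp only [Amul, Prod.fst_zero]; ring
    · simp only [Amul, Prod.snd_zero]; linear_combination -hq
  · refine ⟨_, hM, ?_⟩
    ext
    · simp only [Amul, Prod.fst_zero]; linear_combination hq
    · simp only [Amul, Prod.snd_zero]; ring

theorem forall_amul_eq_zero_imp_iff_isAdmissibleTriple :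
    (∀ p q : ℓ × ℓ, Amul σ c p q = 0 → p = 0 ∨ q = 0) ↔ IsAdmissibleTriple σ c := by
  constructor
  · intro hzero x y hq
    by_contra hxy
    have hp : ((x, y) : ℓ × ℓ) ≠ 0 := by rwa [Ne, Prod.mk_eq_zero]
    obtain ⟨q, hq0, hpq⟩ := exists_amul_eq_zero_of_qc_eq_zero σ c hp hq
    exact (hzero _ q hpq).elim hp hq0
  · intro hadm p q hpq
    rcases smul_eq_zero.1 (qc_smul_eq_zero_of_amul_eq_zero σ c hpq) with hq | hq
    · exact Or.inl (Prod.ext_iff.2 (hadm _ _ hq))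
    · exact Or.inr hq

end AlgebraA

theorem divisionAlgebra_iff_admissible_general [Field k] [Field ℓ] [Algebra k ℓ]
    (hquad : finrank k ℓ = 2)
    (σ : ℓ ≃ₐ[k] ℓ) (c : k × k × k) :
    ((∃ p : ℓ × ℓ, p ≠ 0) ∧
      ∀ a : ℓ × ℓ, a ≠ 0 →
        Function.Bijective (fun p => Amul σ c a p) ∧
        Function.Bijective (fun p => Amul σ c p a)) ↔
      IsAdmissibleTriple σ c := by
  have : FiniteDimensional k ℓ := Module.finite_of_finrank_eq_succ hquad
  have hdiv := (amulₗ σ c).forall_bijective_and_bijective_flip_iff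
  rw [← forall_amul_eq_zero_imp_iff_isAdmissibleTriple]
  exact ⟨fun h => hdiv.1 h.2, fun h => ⟨⟨(1, 0), by simp⟩, hdiv.2 h⟩⟩

/-- Let `k` be a field of characteristic ≠ 2, `ℓ/k` a quadratic field
extension with nontrivial `k`-automorphism `σ`, and `c = (c₁, c₂, c₃) ∈ k³`. Then the
4-dimensional `k`-algebra `A(ℓ, c)` is a division algebra over `k` (it is nonzero, and left and
right multiplication by any nonzero element are bijective) if and only if `c` is
`ℓ`-admissible. -/
theorem divisionAlgebra_iff_admissible [Field k] [Field ℓ] [Algebra k ℓ]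
    (hchar : (2 : k) ≠ 0) (hquad : finrank k ℓ = 2)
    (σ : ℓ ≃ₐ[k] ℓ) (hσ : ∃ x : ℓ, σ x ≠ x) (c : k × k × k) :
    ((∃ p : ℓ × ℓ, p ≠ 0) ∧
      ∀ a : ℓ × ℓ, a ≠ 0 →
        Function.Bijective (fun p => Amul σ c a p) ∧
        Function.Bijective (fun p => Amul σ c p a)) ↔
      IsAdmissibleTriple σ c :=
  divisionAlgebra_iff_admissible_general hquad σ c
end

section
/- Let k be a field of characteristic ≠ 2, ℓ/k a quadratic field extension, and c ∈ k³ an ℓ-admissible triple. Then A(ℓ, c) belongs to 𝒞(k); more precisely: A(ℓ, c) is a unital 4-dimensional division k-algebra with unity (1, 0); the subspace ℓ × {0} is a subalgebra of A(ℓ, c) canonically isomorphic to the field ℓ and is contained in the right nucleus N_r(A(ℓ, c)), so that k·1 is properly contained in N_r(A(ℓ, c)); and the maps α(x, y) = (x, −y) and β(x, y) = (x̄, ȳ) form a Kleinian pair of automorphisms of A(ℓ, c). -/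
open Module Function

variable {k ℓ : Type}

/-- The right nucleus of a (nonassociative) algebra with multiplication `mul`. -/
def rightNucleus {A : Type} (mul : A → A → A) : Set A :=
  {z | ∀ x y, mul (mul x y) z = mul x (mul y z)}

/-- The automorphism `α(x, y) = (x, −y)` of `A(ℓ, c)`. -/
def alphaMap [Field ℓ] (p : ℓ × ℓ) : ℓ × ℓ := (p.1, -p.2)

/-- The automorphism `β(x, y) = (x̄, ȳ)` of `A(ℓ, c)`. -/
def betaMap [Field k] [Field ℓ] [Algebra k ℓ] (σ : ℓ ≃ₐ[k] ℓ) (p : ℓ × ℓ) : ℓ × ℓ :=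
  (σ p.1, σ p.2)

/-
For `p ≠ 0` admissibility gives `q_c(p) ≠ 0`, and both coordinates of `q_c(p) · q` are
`ℓ`-linear combinations of the coordinates of `p · q`. Hence `A(ℓ, c)` has no zero divisors, so
left and right multiplications by a nonzero element are injective `k`-linear endomorphisms of a
finite-dimensional space, hence bijective. That `β` is an involution comes from `Gal(ℓ/k)`
having at most `finrank k ℓ = 2` elements; everything else is a direct computation.
-/

theorem AlgEquiv.involutive_of_finrank_eq_two [Field k] [Field ℓ] [Algebra k ℓ]
    (hquad : finrank k ℓ = 2) (σ : ℓ ≃ₐ[k] ℓ) : Involutive σ := by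
  have : FiniteDimensional k ℓ := .of_finrank_pos (by omega)
  have hcard : Fintype.card (ℓ ≃ₐ[k] ℓ) ≤ 2 := hquad ▸ AlgEquiv.card_le
  have hdvd : orderOf σ ∣ 2 := by
    have := (orderOf_le_card_univ (x := σ)).trans hcard
    interval_cases h : orderOf σ
    · exact absurd h (orderOf_pos σ).ne'
    all_goals norm_num
  intro x
  rw [← AlgEquiv.mul_apply, ← sq, orderOf_dvd_iff_pow_eq_one.mp hdvd, AlgEquiv.one_apply]

theorem LinearMap.bijective_of_noZeroDivisors {K M : Type*} [Field K] [AddCommGroup M]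
    [Module K M] [FiniteDimensional K M] (B : M →ₗ[K] M →ₗ[K] M)
    (hB : ∀ p q, B p q = 0 → p = 0 ∨ q = 0) {a : M} (ha : a ≠ 0) :
    Bijective (B a) ∧ Bijective (B.flip a) := by
  have hl : Injective (B a) := (injective_iff_map_eq_zero _).mpr fun q hq =>
    (hB a q hq).resolve_left ha
  have hr : Injective (B.flip a) := (injective_iff_map_eq_zero _).mpr fun p hp =>
    (hB p a hp).resolve_right ha
  exact ⟨⟨hl, injective_iff_surjective.mp hl⟩, ⟨hr, injective_iff_surjective.mp hr⟩⟩

section Amul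

variable [Field k] [Field ℓ] [Algebra k ℓ] (σ : ℓ ≃ₐ[k] ℓ) (c : k × k × k)

theorem qc_mul_fst (p q : ℓ × ℓ) :
    qc σ c p.1 p.2 * q.1 =
      ((1 - algebraMap k ℓ c.1) * p.1 + algebraMap k ℓ c.1 * σ p.1) * (Amul σ c p q).1
        - (algebraMap k ℓ c.2.1 * p.2 + algebraMap k ℓ c.2.2 * σ p.2) * (Amul σ c p q).2 := by
  simp only [qc, Amul]
  ring

theorem qc_mul_snd (p q : ℓ × ℓ) :
    qc σ c p.1 p.2 * q.2 = p.1 * (Amul σ c p q).2 - p.2 * (Amul σ c p q).1 := by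
  simp only [qc, Amul]
  ring

theorem eq_zero_or_eq_zero_of_Amul_eq_zero (hc : IsAdmissibleTriple σ c) {p q : ℓ × ℓ}
    (h : Amul σ c p q = 0) : p = 0 ∨ q = 0 := by
  by_cases hqc : qc σ c p.1 p.2 = 0
  · exact .inl (Prod.ext_iff.mpr (hc p.1 p.2 hqc))
  · refine .inr (Prod.ext ?_ ?_)
    · simpa [h, hqc] using qc_mul_fst σ c p q
    · simpa [h, hqc] using qc_mul_snd σ c p q

def Amulₗ : (ℓ × ℓ) →ₗ[k] (ℓ × ℓ) →ₗ[k] (ℓ × ℓ) :=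
  LinearMap.mk₂ k (Amul σ c)
    (fun _ _ _ => by ext <;> simp only [Amul, Prod.fst_add, Prod.snd_add, map_add] <;> ring)
    (fun _ _ _ => by
      ext <;> simp only [Amul, Prod.smul_fst, Prod.smul_snd, map_smul] <;>
        simp only [Algebra.smul_def] <;> ring)
    (fun _ _ _ => by ext <;> simp only [Amul, Prod.fst_add, Prod.snd_add] <;> ring)
    (fun _ _ _ => by
      ext <;> simp only [Amul, Prod.smul_fst, Prod.smul_snd] <;>
        simp only [Algebra.smul_def] <;> ring)

theorem Amul_one_left (p : ℓ × ℓ) : Amul σ c (1, 0) p = p := by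
  ext <;> simp [Amul]

theorem Amul_one_right (p : ℓ × ℓ) : Amul σ c p (1, 0) = p := by
  ext <;> simp [Amul]

theorem Amul_inl_inl (x y : ℓ) : Amul σ c (x, 0) (y, 0) = (x * y, 0) := by
  ext <;> simp [Amul]

theorem inl_mem_rightNucleus (x : ℓ) : ((x, 0) : ℓ × ℓ) ∈ rightNucleus (Amul σ c) := by
  intro p q
  ext <;> simp only [Amul, mul_zero, add_zero] <;> ring

theorem range_algebraMap_ssubset_rightNucleus (hσ : ∃ x : ℓ, σ x ≠ x) :
    Set.range (fun t : k => ((algebraMap k ℓ t, 0) : ℓ × ℓ)) ⊂ rightNucleus (Amul σ c) := by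
  obtain ⟨x, hx⟩ := hσ
  refine (Set.ssubset_iff_of_subset ?_).mpr ⟨(x, 0), inl_mem_rightNucleus σ c x, ?_⟩
  · rintro _ ⟨t, rfl⟩
    exact inl_mem_rightNucleus σ c _
  · rintro ⟨t, ht⟩
    have hxt : algebraMap k ℓ t = x := congrArg Prod.fst ht
    exact hx (hxt ▸ σ.commutes t)

theorem alphaMap_Amul (p q : ℓ × ℓ) :
    alphaMap (Amul σ c p q) = Amul σ c (alphaMap p) (alphaMap q) := by
  ext <;> simp only [alphaMap, Amul, map_neg] <;> ring

theorem betaMap_Amul (p q : ℓ × ℓ) :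
    betaMap σ (Amul σ c p q) = Amul σ c (betaMap σ p) (betaMap σ q) := by
  ext <;> simp [betaMap, Amul]

end Amul

section Kleinian

variable [Field k] [Field ℓ] [Algebra k ℓ] (σ : ℓ ≃ₐ[k] ℓ)

theorem alphaMap_add (p q : ℓ × ℓ) : alphaMap (p + q) = alphaMap p + alphaMap q := by
  ext <;> simp [alphaMap, add_comm]

theorem alphaMap_smul (t : k) (p : ℓ × ℓ) : alphaMap (t • p) = t • alphaMap p := by
  ext <;> simp [alphaMap]

theorem betaMap_add (p q : ℓ × ℓ) : betaMap σ (p + q) = betaMap σ p + betaMap σ q := by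
  ext <;> simp [betaMap]

theorem betaMap_smul (t : k) (p : ℓ × ℓ) : betaMap σ (t • p) = t • betaMap σ p := by
  ext <;> simp [betaMap]

theorem alphaMap_involutive : Involutive (alphaMap (ℓ := ℓ)) := by
  intro p
  simp [alphaMap]

theorem betaMap_involutive (hσ : Involutive σ) : Involutive (betaMap σ) := by
  intro p
  simp [betaMap, hσ _]

theorem alphaMap_betaMap (p : ℓ × ℓ) : alphaMap (betaMap σ p) = betaMap σ (alphaMap p) := by
  simp [alphaMap, betaMap]

theorem alphaMap_ne_id (h2 : (2 : ℓ) ≠ 0) : alphaMap (ℓ := ℓ) ≠ id := by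
  intro h
  have h1 : -(1 : ℓ) = 1 := congrArg Prod.snd (congrFun h (0, 1))
  exact h2 (by linear_combination -h1)

theorem betaMap_ne_id (hσ : ∃ x : ℓ, σ x ≠ x) : betaMap σ ≠ id := by
  obtain ⟨x, hx⟩ := hσ
  exact fun h => hx (congrArg Prod.fst (congrFun h (x, 0)))

theorem alphaMap_ne_betaMap (hσ : ∃ x : ℓ, σ x ≠ x) : alphaMap (ℓ := ℓ) ≠ betaMap σ := by
  obtain ⟨x, hx⟩ := hσ
  exact fun h => hx (congrArg Prod.fst (congrFun h (x, 0))).symm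

end Kleinian

/-- For an `ℓ`-admissible triple `c`, the algebra `A(ℓ, c)` belongs to `𝒞(k)`:
it is a 4-dimensional unital division `k`-algebra with unity `(1, 0)`; the subspace `ℓ × {0}`
is a subalgebra canonically isomorphic to `ℓ` (via the injective `k`-linear multiplicative map
`x ↦ (x, 0)`) contained in the right nucleus, so that `k·1` is properly contained in the right
nucleus; and `α(x, y) = (x, −y)`, `β(x, y) = (x̄, ȳ)` form a Kleinian pair of automorphisms. -/
theorem Amul_mem_C [Field k] [Field ℓ] [Algebra k ℓ]
    (hchar : (2 : k) ≠ 0) (hquad : finrank k ℓ = 2)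
    (σ : ℓ ≃ₐ[k] ℓ) (hσ : ∃ x : ℓ, σ x ≠ x)
    (c : k × k × k) (hc : IsAdmissibleTriple σ c) :
    -- division algebra
    (∀ a : ℓ × ℓ, a ≠ 0 →
        Function.Bijective (fun p => Amul σ c a p) ∧
        Function.Bijective (fun p => Amul σ c p a)) ∧
    -- 4-dimensional over k
    finrank k (ℓ × ℓ) = 4 ∧
    -- unital with unity (1, 0)
    (∀ p : ℓ × ℓ, Amul σ c (1, 0) p = p ∧ Amul σ c p (1, 0) = p) ∧
    -- ℓ × {0} is a subalgebra canonically isomorphic to ℓ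
    (∀ x y : ℓ, Amul σ c (x, 0) (y, 0) = (x * y, 0)) ∧
    Function.Injective (fun x : ℓ => ((x, 0) : ℓ × ℓ)) ∧
    -- ℓ × {0} is contained in the right nucleus
    (∀ x : ℓ, ((x, 0) : ℓ × ℓ) ∈ rightNucleus (Amul σ c)) ∧
    -- k·1 is properly contained in the right nucleus
    Set.range (fun t : k => ((algebraMap k ℓ t, 0) : ℓ × ℓ)) ⊂ rightNucleus (Amul σ c) ∧
    -- (α, β) is a Kleinian pair of automorphisms of A(ℓ, c)
    ((∀ p q : ℓ × ℓ, alphaMap (p + q) = alphaMap p + alphaMap q) ∧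
     (∀ (t : k) (p : ℓ × ℓ), alphaMap (t • p) = t • (alphaMap p : ℓ × ℓ)) ∧
     (∀ p q : ℓ × ℓ, betaMap σ (p + q) = betaMap σ p + betaMap σ q) ∧
     (∀ (t : k) (p : ℓ × ℓ), betaMap σ (t • p) = t • betaMap σ p) ∧
     Function.Bijective (alphaMap (ℓ := ℓ)) ∧
     Function.Bijective (betaMap σ) ∧
     (∀ p q : ℓ × ℓ, alphaMap (Amul σ c p q) = Amul σ c (alphaMap p) (alphaMap q)) ∧
     (∀ p q : ℓ × ℓ, betaMap σ (Amul σ c p q) = Amul σ c (betaMap σ p) (betaMap σ q)) ∧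
     (∀ p : ℓ × ℓ, alphaMap (alphaMap p) = p) ∧
     (∀ p : ℓ × ℓ, betaMap σ (betaMap σ p) = p) ∧
     (∀ p : ℓ × ℓ, alphaMap (betaMap σ p) = betaMap σ (alphaMap p)) ∧
     alphaMap (ℓ := ℓ) ≠ id ∧ betaMap σ ≠ id ∧ alphaMap (ℓ := ℓ) ≠ betaMap σ) := by
  have : FiniteDimensional k ℓ := .of_finrank_pos (by omega)
  have h2 : (2 : ℓ) ≠ 0 := by
    rw [← map_ofNat (algebraMap k ℓ) 2]
    exact (map_ne_zero _).mpr hchar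
  have hβ := betaMap_involutive σ (σ.involutive_of_finrank_eq_two hquad)
  refine ⟨fun a ha => (Amulₗ σ c).bijective_of_noZeroDivisors
      (fun _ _ => eq_zero_or_eq_zero_of_Amul_eq_zero σ c hc) ha,
    by rw [finrank_prod, hquad], fun p => ⟨Amul_one_left σ c p, Amul_one_right σ c p⟩,
    Amul_inl_inl σ c, fun _ _ h => congrArg Prod.fst h, inl_mem_rightNucleus σ c,
    range_algebraMap_ssubset_rightNucleus σ c hσ, alphaMap_add, alphaMap_smul, betaMap_add σ,
    betaMap_smul σ, alphaMap_involutive.bijective, hβ.bijective, alphaMap_Amul σ c,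
    betaMap_Amul σ c, alphaMap_involutive, hβ, alphaMap_betaMap σ, alphaMap_ne_id h2,
    betaMap_ne_id σ hσ, alphaMap_ne_betaMap σ hσ⟩
end

section
/- Let k be a field of characteristic ≠ 2, ℓ/k a quadratic field extension, and c = (c₁, c₂, c₃) ∈ k³ an ℓ-admissible triple. Then: (i) A(ℓ, c) is not associative if and only if (c₁, c₂) ≠ (1, 0) and (c₁, c₃) ≠ (0, 0); (ii) A(ℓ, c) is an associative, non-commutative division algebra whose center equals k·1 if and only if (c₁, c₂) = (1, 0); (iii) A(ℓ, c) is commutative (and associative) if and only if (c₁, c₃) = (0, 0). -/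
open Module Function

variable {k ℓ : Type}

/-!
Write `j = (0, 1)`, so that `A(ℓ, c) = ℓ ⊕ ℓ j`. For `a ∈ ℓ` with `σ a ≠ a`, the associator of
`(a, 0), (a, 0), j` is a multiple of `c₁ (1 - c₁) (σ a - a)²`, which forces `c₁ ∈ {0, 1}`; the
associator of `j, (0, a), j` then kills `c₃` when `c₁ = 0` and `c₂` when `c₁ = 1`, and the
commutators of `(a, 0)` and `(0, a)` with `j` kill `c₁` and `c₃`. Conversely, for `c₁ = c₃ = 0`
the algebra is the commutative ring `ℓ[j]/(j² - c₂)`, and for `(c₁, c₂) = (1, 0)` it is the cyclic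
algebra `(ℓ/k, σ, c₃)`, associative because `σ² = 1`. Its centre lies in the fixed field of `σ`,
which is `k` since `ℓ/k` is Galois of degree `2`.
-/

namespace AlgEquiv

variable [Field k] [Field ℓ] [Algebra k ℓ]

theorem natCard_eq_two_of_finrank_eq_two (hquad : finrank k ℓ = 2) {σ : ℓ ≃ₐ[k] ℓ}
    (hσ : σ ≠ 1) : Nat.card (ℓ ≃ₐ[k] ℓ) = 2 := by
  have : FiniteDimensional k ℓ := .of_finrank_pos (by omega)
  refine le_antisymm ?_ (Finite.one_lt_card_iff_nontrivial.mpr ⟨σ, 1, hσ⟩)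
  rw [Nat.card_eq_fintype_card, ← hquad]
  exact AlgEquiv.card_le

theorem apply_apply_of_finrank_eq_two (hquad : finrank k ℓ = 2) (σ : ℓ ≃ₐ[k] ℓ)
    (x : ℓ) : σ (σ x) = x := by
  rcases eq_or_ne σ 1 with rfl | hσ
  · rfl
  have hσσ : σ ^ 2 = 1 := natCard_eq_two_of_finrank_eq_two hquad hσ ▸ pow_card_eq_one'
  exact DFunLike.congr_fun hσσ x

theorem mem_range_algebraMap_of_finrank_eq_two (hquad : finrank k ℓ = 2) {σ : ℓ ≃ₐ[k] ℓ}
    (hσ : σ ≠ 1) {x : ℓ} (hx : σ x = x) : x ∈ Set.range (algebraMap k ℓ) := by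
  have : FiniteDimensional k ℓ := .of_finrank_pos (by omega)
  have hcard := natCard_eq_two_of_finrank_eq_two hquad hσ
  have : IsGalois k ℓ := .of_card_aut_eq_finrank k ℓ (hcard.trans hquad.symm)
  refine (IsGalois.mem_range_algebraMap_iff_fixed x).mpr fun f ↦ ?_
  rcases eq_or_ne f 1 with rfl | hf
  · rfl
  obtain ⟨g, -, hg⟩ := (Nat.card_eq_two_iff' (1 : ℓ ≃ₐ[k] ℓ)).mp hcard
  rwa [hg f hf, ← hg σ hσ]

end AlgEquiv

section Amul

variable [Field k] [Field ℓ] [Algebra k ℓ] (σ : ℓ ≃ₐ[k] ℓ) (c : k × k × k)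

def IsAmulAssoc : Prop :=
  ∀ p q r : ℓ × ℓ, Amul σ c (Amul σ c p q) r = Amul σ c p (Amul σ c q r)

def IsAmulComm : Prop :=
  ∀ p q : ℓ × ℓ, Amul σ c p q = Amul σ c q p

def amulCenter : Set (ℓ × ℓ) :=
  {z | ∀ p, Amul σ c z p = Amul σ c p z}

variable {σ c}

theorem eq_zero_of_algebraMap_mul_sub_pow_eq_zero {a : ℓ} (ha : σ a ≠ a) {t : k} {n : ℕ}
    (h : algebraMap k ℓ t * (σ a - a) ^ n = 0) : t = 0 := by
  simpa [sub_eq_zero, ha] using h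

theorem isAmulComm_of_eq_zero (h : (c.1, c.2.2) = (0, 0)) : IsAmulComm σ c := by
  obtain ⟨c₁, c₂, c₃⟩ := c
  obtain ⟨rfl, rfl⟩ := Prod.mk.inj h
  intro p q
  simp only [Amul, map_zero, sub_zero, one_mul, zero_mul, add_zero, Prod.mk.injEq]
  constructor <;> ring

theorem isAmulAssoc_of_eq_zero (h : (c.1, c.2.2) = (0, 0)) : IsAmulAssoc σ c := by
  obtain ⟨c₁, c₂, c₃⟩ := c
  obtain ⟨rfl, rfl⟩ := Prod.mk.inj h
  intro p q r
  simp only [Amul, map_zero, sub_zero, one_mul, zero_mul, add_zero, Prod.mk.injEq]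
  constructor <;> ring

theorem isAmulAssoc_of_eq_one_zero (hσσ : ∀ x, σ (σ x) = x) (h : (c.1, c.2.1) = (1, 0)) :
    IsAmulAssoc σ c := by
  obtain ⟨c₁, c₂, c₃⟩ := c
  obtain ⟨rfl, rfl⟩ := Prod.mk.inj h
  intro p q r
  simp only [Amul, map_one, map_zero, sub_self, zero_mul, one_mul, zero_add, map_add, map_mul,
    hσσ, AlgEquiv.commutes, Prod.mk.injEq]
  constructor <;> ring

theorem isAmulComm_iff {a : ℓ} (ha : σ a ≠ a) : IsAmulComm σ c ↔ (c.1, c.2.2) = (0, 0) := by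
  refine ⟨fun H ↦ ?_, isAmulComm_of_eq_zero⟩
  have h₁ := H (a, 0) (0, 1)
  have h₃ := H (0, a) (0, 1)
  simp only [Amul, mul_zero, map_zero, add_zero, mul_one, zero_add, zero_mul, map_one, one_mul,
    Prod.mk.injEq, true_and, and_true] at h₁ h₃
  rw [Prod.mk.injEq]
  exact ⟨eq_zero_of_algebraMap_mul_sub_pow_eq_zero (n := 1) ha (by linear_combination h₁),
    eq_zero_of_algebraMap_mul_sub_pow_eq_zero (n := 1) ha (by linear_combination h₃)⟩

theorem isAmulAssoc_iff (hσσ : ∀ x, σ (σ x) = x) {a : ℓ} (ha : σ a ≠ a) :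
    IsAmulAssoc σ c ↔ (c.1, c.2.1) = (1, 0) ∨ (c.1, c.2.2) = (0, 0) := by
  refine ⟨fun H ↦ ?_, (·.elim (isAmulAssoc_of_eq_one_zero hσσ) isAmulAssoc_of_eq_zero)⟩
  obtain ⟨c₁, c₂, c₃⟩ := c
  have h₁ := H (a, 0) (a, 0) (0, 1)
  have h₂ := H (0, 1) (0, a) (0, 1)
  simp only [Amul, mul_zero, map_zero, add_zero, zero_mul, mul_one, map_mul, zero_add,
    Prod.mk.injEq, true_and, map_one, map_add, AlgEquiv.commutes, one_mul] at h₁ h₂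
  have hc₁ : c₁ * (1 - c₁) = 0 := eq_zero_of_algebraMap_mul_sub_pow_eq_zero (n := 2) ha
    (by rw [map_mul, map_sub, map_one]; linear_combination h₁)
  rcases mul_eq_zero.mp hc₁ with rfl | hc₁
  · have hc₃ : c₃ = 0 := eq_zero_of_algebraMap_mul_sub_pow_eq_zero (n := 1) ha
      (by simp only [map_zero, sub_zero, one_mul, zero_mul, add_zero] at h₂
          linear_combination -h₂)
    simp [hc₃]
  · obtain rfl : c₁ = 1 := (sub_eq_zero.mp hc₁).symm
    have hc₂ : c₂ = 0 := eq_zero_of_algebraMap_mul_sub_pow_eq_zero (n := 1) ha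
      (by simp only [map_one, sub_self, zero_mul, one_mul, zero_add] at h₂
          linear_combination h₂)
    simp [hc₂]

theorem amulCenter_eq_range (hquad : finrank k ℓ = 2) {a : ℓ} (ha : σ a ≠ a) (h : c.1 = 1) :
    amulCenter σ c = Set.range fun t : k ↦ (algebraMap k ℓ t, (0 : ℓ)) := by
  obtain ⟨c₁, c₂, c₃⟩ := c
  obtain rfl : c₁ = 1 := h
  ext ⟨x, y⟩
  refine ⟨fun hz ↦ ?_, ?_⟩
  · have h₁ := hz (a, 0)
    have h₂ := hz (0, 1)
    simp only [Amul, mul_zero, add_zero, map_one, sub_self, zero_mul, one_mul, zero_add, map_zero,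
      Prod.mk.injEq, mul_one] at h₁ h₂
    have hy : y = 0 := by
      have : y * (σ a - a) = 0 := by linear_combination -h₁.2
      simpa [sub_eq_zero, ha] using this
    have hσ : σ ≠ 1 := by rintro rfl; exact ha rfl
    obtain ⟨t, rfl⟩ := AlgEquiv.mem_range_algebraMap_of_finrank_eq_two hquad hσ h₂.2
    exact ⟨t, by rw [hy]⟩
  · rintro ⟨t, ht⟩ p
    obtain ⟨rfl, rfl⟩ := Prod.mk.inj ht
    simp [Amul, mul_comm]

end Amul

theorem Amul_trichotomy_general [Field k] [Field ℓ] [Algebra k ℓ]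
    (hquad : finrank k ℓ = 2)
    (σ : ℓ ≃ₐ[k] ℓ) (hσ : ∃ x : ℓ, σ x ≠ x)
    (c : k × k × k) :
    -- (i)
    ((¬ ∀ p q r : ℓ × ℓ, Amul σ c (Amul σ c p q) r = Amul σ c p (Amul σ c q r)) ↔
      ((c.1, c.2.1) ≠ ((1 : k), (0 : k)) ∧ (c.1, c.2.2) ≠ ((0 : k), (0 : k)))) ∧
    -- (ii)
    (((∀ p q r : ℓ × ℓ, Amul σ c (Amul σ c p q) r = Amul σ c p (Amul σ c q r)) ∧
      (¬ ∀ p q : ℓ × ℓ, Amul σ c p q = Amul σ c q p) ∧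
      {z : ℓ × ℓ | ∀ p : ℓ × ℓ, Amul σ c z p = Amul σ c p z} =
        Set.range (fun t : k => ((algebraMap k ℓ t, 0) : ℓ × ℓ))) ↔
      (c.1, c.2.1) = ((1 : k), (0 : k))) ∧
    -- (iii)
    (((∀ p q : ℓ × ℓ, Amul σ c p q = Amul σ c q p) ∧
      (∀ p q r : ℓ × ℓ, Amul σ c (Amul σ c p q) r = Amul σ c p (Amul σ c q r))) ↔
      (c.1, c.2.2) = ((0 : k), (0 : k))) := by
  obtain ⟨a, ha⟩ := hσ
  have hassoc : IsAmulAssoc σ c ↔ _ :=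
    isAmulAssoc_iff (AlgEquiv.apply_apply_of_finrank_eq_two hquad σ) ha
  have hcomm : IsAmulComm σ c ↔ _ := isAmulComm_iff ha
  refine ⟨hassoc.not.trans not_or, ⟨?_, fun h ↦ ?_⟩, ?_⟩
  · rintro ⟨hA, hnc, -⟩
    exact (hassoc.mp hA).resolve_right (mt hcomm.mpr hnc)
  · have h₁ : c.1 = 1 := congrArg Prod.fst h
    refine ⟨hassoc.mpr (.inl h), fun H ↦ ?_, amulCenter_eq_range hquad ha h₁⟩
    exact one_ne_zero (h₁.symm.trans (congrArg Prod.fst (hcomm.mp H)))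
  · exact ⟨fun ⟨H, _⟩ ↦ hcomm.mp H, fun h ↦ ⟨hcomm.mpr h, hassoc.mpr (.inr h)⟩⟩

/-- Let `c = (c₁, c₂, c₃) ∈ k³` be an `ℓ`-admissible triple. Then:
(i) `A(ℓ, c)` is not associative iff `(c₁, c₂) ≠ (1, 0)` and `(c₁, c₃) ≠ (0, 0)`;
(ii) `A(ℓ, c)` is an associative, non-commutative division algebra whose center (set of
elements commuting with everything) equals `k·1` iff `(c₁, c₂) = (1, 0)`;
(iii) `A(ℓ, c)` is commutative and associative iff `(c₁, c₃) = (0, 0)`. -/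
theorem Amul_trichotomy [Field k] [Field ℓ] [Algebra k ℓ]
    (hchar : (2 : k) ≠ 0) (hquad : finrank k ℓ = 2)
    (σ : ℓ ≃ₐ[k] ℓ) (hσ : ∃ x : ℓ, σ x ≠ x)
    (c : k × k × k) (hc : IsAdmissibleTriple σ c) :
    -- (i)
    ((¬ ∀ p q r : ℓ × ℓ, Amul σ c (Amul σ c p q) r = Amul σ c p (Amul σ c q r)) ↔
      ((c.1, c.2.1) ≠ ((1 : k), (0 : k)) ∧ (c.1, c.2.2) ≠ ((0 : k), (0 : k)))) ∧
    -- (ii)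
    (((∀ p q r : ℓ × ℓ, Amul σ c (Amul σ c p q) r = Amul σ c p (Amul σ c q r)) ∧
      (¬ ∀ p q : ℓ × ℓ, Amul σ c p q = Amul σ c q p) ∧
      {z : ℓ × ℓ | ∀ p : ℓ × ℓ, Amul σ c z p = Amul σ c p z} =
        Set.range (fun t : k => ((algebraMap k ℓ t, 0) : ℓ × ℓ))) ↔
      (c.1, c.2.1) = ((1 : k), (0 : k))) ∧
    -- (iii)
    (((∀ p q : ℓ × ℓ, Amul σ c p q = Amul σ c q p) ∧
      (∀ p q r : ℓ × ℓ, Amul σ c (Amul σ c p q) r = Amul σ c p (Amul σ c q r))) ↔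
      (c.1, c.2.2) = ((0 : k), (0 : k))) :=
  Amul_trichotomy_general hquad σ hσ c
end

section
/- Let k be a field of characteristic ≠ 2 and let A be a 4-dimensional unital division k-algebra with a Kleinian pair (α, β). For (i, j) ∈ ℤ/2 × ℤ/2 set A_{ij} = E_α((−1)^i) ∩ E_β((−1)^j). Then A is the internal direct sum A = ⊕_{(i,j)} A_{ij}, each subspace A_{ij} is 1-dimensional over k, A_{00} = k·1, and A_{ij}·A_{mn} ⊆ A_{(i+m)(j+n)} for all i, j, m, n (so the decomposition is a (ℤ/2 × ℤ/2)-grading of A). -/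
/-!
Since `2 ≠ 0`, the commuting involutions `α, β` are simultaneously diagonalisable: the operators
`¼ (1 + s α)(1 + t β)` with `s, t = ±1` are complementary projections onto the joint eigenspaces
`A_{ij}`, and these multiply as a grading because `α, β` are automorphisms. In a division algebra
a product of nonzero elements is nonzero, so the nonzero grades form a subgroup of `(ℤ/2)²`; it
lies in none of the three subgroups of order 2, because `α ≠ 1`, `β ≠ 1` and `α ≠ β`. So all four
grades are nonzero, and `dim A = 4` makes each of them a line. Finally `1 ∈ A_{00}`, since an
automorphism maps `1` to a nonzero idempotent `e`, and `e · e = e · 1` gives `e = 1`.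
-/

open Module Function

variable {k : Type} [Field k]

/-- A Kleinian pair for a nonassociative `k`-algebra `(A, mul)`: a pair of distinct commuting
automorphisms, each of order 2. -/
def IsKleinPair {A : Type} [AddCommGroup A] [Module k A]
    (mul : A →ₗ[k] A →ₗ[k] A) (α β : A ≃ₗ[k] A) : Prop :=
  (∀ x y : A, α (mul x y) = mul (α x) (α y)) ∧
  (∀ x y : A, β (mul x y) = mul (β x) (β y)) ∧
  (∀ x : A, α (α x) = x) ∧ (∀ x : A, β (β x) = x) ∧
  (∀ x : A, α (β x) = β (α x)) ∧
  α ≠ LinearEquiv.refl k A ∧ β ≠ LinearEquiv.refl k A ∧ α ≠ β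

/-- The eigenspace `E_f(ε) = {x | f x = ε • x}` of a `k`-linear operator `f`. -/
def eigSub {A : Type} [AddCommGroup A] [Module k A] (f : A →ₗ[k] A) (ε : k) :
    Submodule k A where
  carrier := {x | f x = ε • x}
  add_mem' := by
    intro a b (ha : f a = ε • a) (hb : f b = ε • b)
    show f (a + b) = ε • (a + b)
    rw [map_add, ha, hb, smul_add]
  zero_mem' := by show f 0 = ε • (0 : A); simp
  smul_mem' := by
    intro t x (hx : f x = ε • x)
    show f (t • x) = ε • (t • x)
    rw [map_smul, hx, smul_comm]

/-- The subspace `A_{ij} = E_α((−1)^i) ∩ E_β((−1)^j)` for `(i, j) ∈ ℤ/2 × ℤ/2`. -/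
def kleinGrade {A : Type} [AddCommGroup A] [Module k A] (α β : A ≃ₗ[k] A)
    (ij : ZMod 2 × ZMod 2) : Submodule k A :=
  eigSub (α.toLinearMap) ((-1 : k) ^ ij.1.val) ⊓ eigSub (β.toLinearMap) ((-1 : k) ^ ij.2.val)

theorem neg_one_pow_val_add (i j : ZMod 2) :
    (-1 : k) ^ (i + j).val = (-1) ^ i.val * (-1) ^ j.val := by
  rw [ZMod.val_add, ← neg_one_pow_eq_pow_mod_two, pow_add]

theorem neg_one_pow_val_mul_self (i : ZMod 2) : (-1 : k) ^ i.val * (-1) ^ i.val = 1 := by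
  rw [← pow_add, Even.neg_one_pow ⟨i.val, rfl⟩]

theorem neg_one_pow_val_mul_of_ne {i j : ZMod 2} (h : i ≠ j) :
    (-1 : k) ^ i.val * (-1) ^ j.val = -1 := by
  obtain rfl : j = i + 1 := by revert i j; decide
  rw [neg_one_pow_val_add, ← mul_assoc, neg_one_pow_val_mul_self]
  simp [ZMod.val_one]

theorem forall_zmod_two_sq_of_add_closed {P : ZMod 2 × ZMod 2 → Prop}
    (hadd : ∀ g h, P g → P h → P (g + h)) (h₁ : ∃ g, g.1 ≠ 0 ∧ P g)
    (h₂ : ∃ g, g.2 ≠ 0 ∧ P g) (h₁₂ : ∃ g, g.1 ≠ g.2 ∧ P g) : ∀ g, P g := by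
  classical
  have key : ∀ p : ZMod 2 × ZMod 2 → Bool, (∀ g h, p g → p h → p (g + h)) →
      (∃ g, g.1 ≠ 0 ∧ p g) → (∃ g, g.2 ≠ 0 ∧ p g) → (∃ g, g.1 ≠ g.2 ∧ p g) → ∀ g, p g := by
    decide
  simpa using key (fun g => decide (P g)) (by simpa using hadd) (by simpa using h₁)
    (by simpa using h₂) (by simpa using h₁₂)

namespace DirectSum.IsInternal

theorem finrank_eq_one_of_ne_bot {K V ι : Type*} [Field K] [AddCommGroup V] [Module K V]
    [FiniteDimensional K V] [Fintype ι] [DecidableEq ι] {W : ι → Submodule K V}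
    (hW : IsInternal W) (hne : ∀ i, W i ≠ ⊥) (hV : finrank K V = Fintype.card ι) (i : ι) :
    finrank K (W i) = 1 := by
  have hpos : ∀ i, 1 ≤ finrank K (W i) := fun i =>
    Module.finrank_pos_iff.2 (Submodule.nontrivial_iff_ne_bot.2 (hne i))
  have hsum : ∑ i, finrank K (W i) = ∑ _i : ι, 1 := by
    rw [← Module.finrank_directSum, (LinearEquiv.ofBijective (coeLinearMap W) hW).finrank_eq, hV]
    simp
  exact ((Finset.sum_eq_sum_iff_of_le fun i _ => hpos i).1 hsum.symm i (Finset.mem_univ i)).symm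

end DirectSum.IsInternal

section KleinProjection

variable {A : Type} [AddCommGroup A] [Module k A] {α β : A ≃ₗ[k] A}

theorem mem_kleinGrade_iff {g : ZMod 2 × ZMod 2} {x : A} :
    x ∈ kleinGrade α β g ↔ α x = (-1 : k) ^ g.1.val • x ∧ β x = (-1 : k) ^ g.2.val • x :=
  Iff.rfl

variable (α β) in
/-- `¼ (1 + s α)(1 + t β)` with `(s, t) = ((-1) ^ i, (-1) ^ j)`, multiplied out. -/
noncomputable def kleinProj (g : ZMod 2 × ZMod 2) : A →ₗ[k] A :=
  (4 : k)⁻¹ • (LinearMap.id + (-1 : k) ^ g.1.val • α.toLinearMap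
    + (-1 : k) ^ g.2.val • β.toLinearMap
    + ((-1 : k) ^ g.1.val * (-1) ^ g.2.val) • (α.toLinearMap ∘ₗ β.toLinearMap))

theorem kleinProj_apply (g : ZMod 2 × ZMod 2) (x : A) :
    kleinProj α β g x = (4 : k)⁻¹ • (x + (-1 : k) ^ g.1.val • α x + (-1 : k) ^ g.2.val • β x
      + ((-1 : k) ^ g.1.val * (-1) ^ g.2.val) • α (β x)) := by
  simp [kleinProj]

theorem kleinProj_mem (hα : ∀ x, α (α x) = x) (hβ : ∀ x, β (β x) = x)
    (hαβ : ∀ x, α (β x) = β (α x)) (g : ZMod 2 × ZMod 2) (x : A) :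
    kleinProj α β g x ∈ kleinGrade α β g := by
  have hs := neg_one_pow_val_mul_self (k := k) g.1
  have ht := neg_one_pow_val_mul_self (k := k) g.2
  refine mem_kleinGrade_iff.2 ⟨?_, ?_⟩
  · simp only [kleinProj_apply, map_smul, map_add, hα]
    linear_combination (norm := module)
      hs • (-(4 : k)⁻¹ • α x + (-(4 : k)⁻¹ * (-1) ^ g.2.val) • α (β x))
  · simp only [kleinProj_apply, map_smul, map_add, hβ, ← hαβ]
    linear_combination (norm := module)
      ht • (-(4 : k)⁻¹ • β x + (-(4 : k)⁻¹ * (-1) ^ g.1.val) • α (β x))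

theorem kleinProj_apply_of_mem {g h : ZMod 2 × ZMod 2} {x : A} (hx : x ∈ kleinGrade α β h) :
    kleinProj α β g x = ((4 : k)⁻¹ * (1 + (-1) ^ g.1.val * (-1) ^ h.1.val)
      * (1 + (-1) ^ g.2.val * (-1) ^ h.2.val)) • x := by
  obtain ⟨hαx, hβx⟩ := mem_kleinGrade_iff.1 hx
  rw [kleinProj_apply, hαx, hβx, map_smul, hαx]
  module

theorem sum_kleinProj (h2 : (2 : k) ≠ 0) (x : A) : ∑ g, kleinProj α β g x = x := by
  have huniv : (Finset.univ : Finset (ZMod 2)) = {0, 1} := by decide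
  simp only [Fintype.sum_prod_type, huniv, Finset.sum_pair zero_ne_one, kleinProj_apply,
    ZMod.val_zero, ZMod.val_one, pow_zero, pow_one]
  have h4 : (4 : k) ≠ 0 := by
    rw [show (4 : k) = 2 * 2 by norm_num]; exact mul_ne_zero h2 h2
  match_scalars <;> field_simp <;> ring

end KleinProjection

section KleinDecomposition

variable {A : Type} [AddCommGroup A] [Module k A] {α β : A ≃ₗ[k] A}

theorem kleinProj_apply_of_mem_self (h2 : (2 : k) ≠ 0) {g : ZMod 2 × ZMod 2} {x : A}
    (hx : x ∈ kleinGrade α β g) : kleinProj α β g x = x := by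
  rw [kleinProj_apply_of_mem hx, neg_one_pow_val_mul_self, neg_one_pow_val_mul_self]
  have h4 : (4 : k) = 2 * 2 := by norm_num
  rw [one_add_one_eq_two, h4, mul_assoc, inv_mul_cancel₀ (mul_ne_zero h2 h2), one_smul]

theorem kleinProj_apply_of_mem_of_ne {g h : ZMod 2 × ZMod 2} (hgh : g ≠ h) {x : A}
    (hx : x ∈ kleinGrade α β h) : kleinProj α β g x = 0 := by
  rw [kleinProj_apply_of_mem hx]
  obtain h₁ | h₂ : g.1 ≠ h.1 ∨ g.2 ≠ h.2 := by
    contrapose! hgh; exact Prod.ext hgh.1 hgh.2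
  · simp [neg_one_pow_val_mul_of_ne h₁]
  · simp [neg_one_pow_val_mul_of_ne h₂]

variable (h2 : (2 : k) ≠ 0) (hα : ∀ x, α (α x) = x) (hβ : ∀ x, β (β x) = x)
  (hαβ : ∀ x, α (β x) = β (α x))
include h2 hα hβ hαβ

theorem iSup_kleinGrade_eq_top : ⨆ g, kleinGrade α β g = ⊤ := by
  refine eq_top_iff.2 fun x _ => ?_
  rw [← sum_kleinProj h2 x]
  exact Submodule.sum_mem_iSup fun g => kleinProj_mem hα hβ hαβ g x

theorem isInternal_kleinGrade : DirectSum.IsInternal (kleinGrade α β) := by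
  refine DirectSum.isInternal_submodule_of_iSupIndep_of_iSup_eq_top (fun g => ?_)
    (iSup_kleinGrade_eq_top h2 hα hβ hαβ)
  have hker : ⨆ (h) (_ : h ≠ g), kleinGrade α β h ≤ LinearMap.ker (kleinProj α β g) :=
    iSup₂_le fun h hhg y hy => kleinProj_apply_of_mem_of_ne (Ne.symm hhg) hy
  refine Submodule.disjoint_def.2 fun x hx hx' => ?_
  rw [← kleinProj_apply_of_mem_self h2 hx]
  exact hker hx'

theorem linearMap_ext_kleinGrade {f f' : A →ₗ[k] A}
    (h : ∀ g, kleinGrade α β g ≠ ⊥ → ∀ x ∈ kleinGrade α β g, f x = f' x) : f = f' := by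
  refine LinearMap.ext_on (s := ⋃ g, kleinGrade α β g) ?_ ?_
  · rw [← Submodule.iSup_eq_span, iSup_kleinGrade_eq_top h2 hα hβ hαβ]
  · simp only [Set.EqOn, Set.mem_iUnion]
    rintro x ⟨g, hx⟩
    by_cases hg : kleinGrade α β g = ⊥
    · rw [hg] at hx
      simp [(Submodule.mem_bot k).1 hx]
    · exact h g hg x hx

end KleinDecomposition

section KleinPair

variable {A : Type} [AddCommGroup A] [Module k A] {mul : A →ₗ[k] A →ₗ[k] A} {α β : A ≃ₗ[k] A}

theorem mul_mem_kleinGrade (hα : ∀ x y, α (mul x y) = mul (α x) (α y))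
    (hβ : ∀ x y, β (mul x y) = mul (β x) (β y)) {g h : ZMod 2 × ZMod 2} {x y : A}
    (hx : x ∈ kleinGrade α β g) (hy : y ∈ kleinGrade α β h) :
    mul x y ∈ kleinGrade α β (g + h) := by
  obtain ⟨hαx, hβx⟩ := mem_kleinGrade_iff.1 hx
  obtain ⟨hαy, hβy⟩ := mem_kleinGrade_iff.1 hy
  refine mem_kleinGrade_iff.2 ⟨?_, ?_⟩
  · rw [hα, hαx, hαy, Prod.fst_add, neg_one_pow_val_add, map_smul, LinearMap.map_smul₂,
      smul_smul, mul_comm]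
  · rw [hβ, hβx, hβy, Prod.snd_add, neg_one_pow_val_add, map_smul, LinearMap.map_smul₂,
      smul_smul, mul_comm]

theorem kleinGrade_add_ne_bot (hα : ∀ x y, α (mul x y) = mul (α x) (α y))
    (hβ : ∀ x y, β (mul x y) = mul (β x) (β y)) (hmul : ∀ a, a ≠ 0 → Injective (mul a))
    {g h : ZMod 2 × ZMod 2} (hg : kleinGrade α β g ≠ ⊥) (hh : kleinGrade α β h ≠ ⊥) :
    kleinGrade α β (g + h) ≠ ⊥ := by
  obtain ⟨x, hx, hx0⟩ := (Submodule.ne_bot_iff _).1 hg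
  obtain ⟨y, hy, hy0⟩ := (Submodule.ne_bot_iff _).1 hh
  refine (Submodule.ne_bot_iff _).2 ⟨mul x y, mul_mem_kleinGrade hα hβ hx hy, fun hxy => hy0 ?_⟩
  exact hmul x hx0 (by rw [hxy, map_zero])

theorem exists_kleinGrade_ne_bot (h2 : (2 : k) ≠ 0) (hkl : IsKleinPair mul α β) :
    (∃ g, g.1 ≠ 0 ∧ kleinGrade α β g ≠ ⊥) ∧ (∃ g, g.2 ≠ 0 ∧ kleinGrade α β g ≠ ⊥) ∧
      ∃ g, g.1 ≠ g.2 ∧ kleinGrade α β g ≠ ⊥ := by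
  obtain ⟨-, -, hα, hβ, hαβ, hα1, hβ1, hne⟩ := hkl
  refine ⟨?_, ?_, ?_⟩ <;> by_contra! hbot
  · refine hα1 (LinearEquiv.toLinearMap_injective
      (linearMap_ext_kleinGrade h2 hα hβ hαβ fun g hg x hx => ?_))
    simp [(mem_kleinGrade_iff.1 hx).1, not_imp_comm.1 (hbot g) hg]
  · refine hβ1 (LinearEquiv.toLinearMap_injective
      (linearMap_ext_kleinGrade h2 hα hβ hαβ fun g hg x hx => ?_))
    simp [(mem_kleinGrade_iff.1 hx).2, not_imp_comm.1 (hbot g) hg]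
  · refine hne (LinearEquiv.toLinearMap_injective
      (linearMap_ext_kleinGrade h2 hα hβ hαβ fun g hg x hx => ?_))
    simp [(mem_kleinGrade_iff.1 hx).1, (mem_kleinGrade_iff.1 hx).2, not_imp_comm.1 (hbot g) hg]

theorem map_one_of_map_mul {one : A} (hone : ∀ x, mul one x = x ∧ mul x one = x)
    (hmul : ∀ a, a ≠ 0 → Injective (mul a)) (hone0 : one ≠ 0) {γ : A ≃ₗ[k] A}
    (hγ : ∀ x y, γ (mul x y) = mul (γ x) (γ y)) : γ one = one :=
  hmul (γ one) (γ.map_ne_zero_iff.2 hone0) <| by rw [← hγ, (hone one).1, (hone (γ one)).2]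

end KleinPair

theorem klein_grading_general (hchar : (2 : k) ≠ 0)
    (A : Type) [AddCommGroup A] [Module k A]
    (mul : A →ₗ[k] A →ₗ[k] A) (one : A)
    (h4 : finrank k A = 4)
    (hone : ∀ x : A, mul one x = x ∧ mul x one = x)
    (hdiv : ∀ a : A, a ≠ 0 →
      Function.Bijective (fun x => mul a x) ∧ Function.Bijective (fun x => mul x a))
    (α β : A ≃ₗ[k] A) (hkl : IsKleinPair mul α β) :
    DirectSum.IsInternal (fun ij : ZMod 2 × ZMod 2 => kleinGrade α β ij) ∧
    (∀ ij : ZMod 2 × ZMod 2, finrank k ↥(kleinGrade α β ij) = 1) ∧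
    kleinGrade α β (0, 0) = Submodule.span k {one} ∧
    (∀ (ij mn : ZMod 2 × ZMod 2) (x y : A),
      x ∈ kleinGrade α β ij → y ∈ kleinGrade α β mn → mul x y ∈ kleinGrade α β (ij + mn)) := by
  have : FiniteDimensional k A := Module.finite_of_finrank_eq_succ h4
  have : Nontrivial A := Module.nontrivial_of_finrank_eq_succ h4
  obtain ⟨h₁, h₂, h₁₂⟩ := exists_kleinGrade_ne_bot hchar hkl
  obtain ⟨hαmul, hβmul, hα, hβ, hαβ, -⟩ := hkl
  have hmul : ∀ a, a ≠ 0 → Injective (mul a) := fun a ha => (hdiv a ha).1.injective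
  have hone0 : one ≠ 0 := by
    rintro rfl
    obtain ⟨x, hx⟩ := exists_ne (0 : A)
    exact hx (by simpa using ((hone x).1).symm)
  have hone_mem : one ∈ kleinGrade α β 0 := mem_kleinGrade_iff.2
    ⟨by simpa using map_one_of_map_mul hone hmul hone0 hαmul,
      by simpa using map_one_of_map_mul hone hmul hone0 hβmul⟩
  have hint := isInternal_kleinGrade hchar hα hβ hαβ
  have hne : ∀ g, kleinGrade α β g ≠ ⊥ :=
    forall_zmod_two_sq_of_add_closed (fun _ _ => kleinGrade_add_ne_bot hαmul hβmul hmul) h₁ h₂ h₁₂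
  have hdim := hint.finrank_eq_one_of_ne_bot hne (by simp [h4])
  exact ⟨hint, hdim, eq_span_singleton_of_mem_of_finrank_eq_one (hdim 0) hone_mem hone0,
    fun _ _ _ _ => mul_mem_kleinGrade hαmul hβmul⟩

/-- Let `k` be a field of characteristic ≠ 2 and `A` a 4-dimensional unital
division `k`-algebra with a Kleinian pair `(α, β)`. Then `A` is the internal direct sum of the
subspaces `A_{ij} = E_α((−1)^i) ∩ E_β((−1)^j)`, each `A_{ij}` is 1-dimensional over `k`,
`A_{00} = k·1`, and `A_{ij}·A_{mn} ⊆ A_{(i+m)(j+n)}`, i.e. the decomposition is a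
`(ℤ/2 × ℤ/2)`-grading of `A`. -/
theorem klein_grading (hchar : (2 : k) ≠ 0)
    (A : Type) [AddCommGroup A] [Module k A] [FiniteDimensional k A]
    (mul : A →ₗ[k] A →ₗ[k] A) (one : A)
    (h4 : finrank k A = 4)
    (hone : ∀ x : A, mul one x = x ∧ mul x one = x)
    (hdiv : ∀ a : A, a ≠ 0 →
      Function.Bijective (fun x => mul a x) ∧ Function.Bijective (fun x => mul x a))
    (α β : A ≃ₗ[k] A) (hkl : IsKleinPair mul α β) :
    DirectSum.IsInternal (fun ij : ZMod 2 × ZMod 2 => kleinGrade α β ij) ∧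
    (∀ ij : ZMod 2 × ZMod 2, finrank k ↥(kleinGrade α β ij) = 1) ∧
    kleinGrade α β (0, 0) = Submodule.span k {one} ∧
    (∀ (ij mn : ZMod 2 × ZMod 2) (x y : A),
      x ∈ kleinGrade α β ij → y ∈ kleinGrade α β mn → mul x y ∈ kleinGrade α β (ij + mn)) :=
  klein_grading_general hchar A mul one h4 hone hdiv α β hkl
end

section
/- Let k be a field of characteristic ≠ 2 and let A be a 4-dimensional unital division k-algebra with a Kleinian pair (α, β). Then, with respect to the trace bilinear form τ_A, the orthogonal complement of the fixed space E_β(1) equals E_β(−1); that is, {y ∈ A | τ_A(x, y) = 0 for all x with β(x) = x} = {y ∈ A | β(y) = −y}. -/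
/-!
The trace form is invariant under every automorphism `β`, and `tr L_z = 0` whenever `β z = -z`
(as `L_{β z}` is conjugate to `L_z`); hence `E_β(1) ⊥ E_β(-1)`. The restriction of `τ_A` to
`E_β(1)` is nondegenerate: for `0 ≠ y ∈ E_β(1)` the solution `w` of `w · y = 1` is again
`β`-fixed, and `τ_A(w, y) = tr(id) = 4 ≠ 0`. So for `y ⊥ E_β(1)` the fixed vector `y + β y`,
also orthogonal to `E_β(1)`, vanishes.
-/

open Module Function

variable {k : Type} [Field k]

/-- The trace bilinear form `τ_A(x, y) = tr(L_{x·y})` of a finite-dimensional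
nonassociative algebra. -/
noncomputable def traceForm {k A : Type} [Field k] [AddCommGroup A] [Module k A]
    (mul : A →ₗ[k] A →ₗ[k] A) (x y : A) : k :=
  LinearMap.trace k A (mul (mul x y))

section TraceForm

variable {A : Type} [AddCommGroup A] [Module k A] {mul : A →ₗ[k] A →ₗ[k] A}
  {φ : A ≃ₗ[k] A}

lemma traceForm_add_right (x y z : A) :
    traceForm mul x (y + z) = traceForm mul x y + traceForm mul x z := by
  simp only [traceForm, map_add]

lemma trace_mul_map_eq (hφ : ∀ x y : A, φ (mul x y) = mul (φ x) (φ y)) (z : A) :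
    LinearMap.trace k A (mul (φ z)) = LinearMap.trace k A (mul z) := by
  have hconj : mul (φ z) = φ.conj (mul z) := by
    ext y
    simp [hφ]
  rw [hconj, LinearMap.trace_conj']

lemma traceForm_map_map (hφ : ∀ x y : A, φ (mul x y) = mul (φ x) (φ y)) (x y : A) :
    traceForm mul (φ x) (φ y) = traceForm mul x y := by
  rw [traceForm, ← hφ, trace_mul_map_eq hφ, traceForm]

lemma trace_mul_eq_zero_of_map_eq_neg (hchar : (2 : k) ≠ 0)
    (hφ : ∀ x y : A, φ (mul x y) = mul (φ x) (φ y)) {z : A} (hz : φ z = -z) :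
    LinearMap.trace k A (mul z) = 0 := by
  have h := trace_mul_map_eq hφ z
  rw [hz, map_neg, map_neg, neg_eq_iff_add_eq_zero, ← two_mul] at h
  exact (mul_eq_zero.mp h).resolve_left hchar

lemma traceForm_eq_zero_of_map_eq_self_of_map_eq_neg (hchar : (2 : k) ≠ 0)
    (hφ : ∀ x y : A, φ (mul x y) = mul (φ x) (φ y)) {x y : A} (hx : φ x = x)
    (hy : φ y = -y) : traceForm mul x y = 0 :=
  trace_mul_eq_zero_of_map_eq_neg hchar hφ (by rw [hφ, hx, hy, map_neg])

lemma map_one_eq_one {one : A} (hone : ∀ x : A, mul one x = x ∧ mul x one = x)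
    (hφ : ∀ x y : A, φ (mul x y) = mul (φ x) (φ y)) : φ one = one := by
  obtain ⟨a, ha⟩ := φ.surjective one
  calc φ one = mul (φ one) (φ a) := by rw [ha, (hone _).2]
    _ = one := by rw [← hφ, (hone a).1, ha]

lemma eq_zero_of_map_eq_self_of_traceForm_eq_zero [FiniteDimensional k A]
    (hrank : (finrank k A : k) ≠ 0) {one : A} (hone : ∀ x : A, mul one x = x ∧ mul x one = x)
    (hright : ∀ a : A, a ≠ 0 → Bijective fun x => mul x a)
    (hφ : ∀ x y : A, φ (mul x y) = mul (φ x) (φ y)) {y : A} (hy : φ y = y)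
    (horth : ∀ x : A, φ x = x → traceForm mul x y = 0) : y = 0 := by
  by_contra hy0
  obtain ⟨w, hw⟩ : ∃ w, mul w y = one := (hright y hy0).2 one
  have hwφ : φ w = w := (hright y hy0).1 <| by
    change mul (φ w) y = mul w y
    rw [← hy, ← hφ, hy, hw, map_one_eq_one hone hφ]
  have hmul_one : mul one = LinearMap.id := LinearMap.ext fun x => (hone x).1
  apply hrank
  rw [← LinearMap.trace_id, ← hmul_one, ← horth w hwφ, traceForm, ← hw]

end TraceForm

/-- Let `k` be a field of characteristic ≠ 2 and `A` a 4-dimensional unital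
division `k`-algebra with a Kleinian pair `(α, β)`. Then, with respect to the trace bilinear
form `τ_A`, the orthogonal complement of the fixed space `E_β(1)` equals `E_β(−1)`. -/
theorem orthogonal_complement_of_fixed_space (hchar : (2 : k) ≠ 0)
    (A : Type) [AddCommGroup A] [Module k A] [FiniteDimensional k A]
    (mul : A →ₗ[k] A →ₗ[k] A) (one : A)
    (h4 : finrank k A = 4)
    (hone : ∀ x : A, mul one x = x ∧ mul x one = x)
    (hdiv : ∀ a : A, a ≠ 0 →
      Function.Bijective (fun x => mul a x) ∧ Function.Bijective (fun x => mul x a))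
    (α β : A ≃ₗ[k] A) (hkl : IsKleinPair mul α β) :
    {y : A | ∀ x : A, β x = x → traceForm mul x y = 0} = {y : A | β y = -y} := by
  obtain ⟨-, hβ, -, hβ2, -⟩ := hkl
  have hrank : (finrank k A : k) ≠ 0 := by
    rw [h4, Nat.cast_ofNat, show (4 : k) = 2 * 2 by norm_num]
    exact mul_ne_zero hchar hchar
  ext y
  constructor
  · intro hy
    have hsym : β (y + β y) = y + β y := by rw [map_add, hβ2, add_comm]
    have horth : ∀ x : A, β x = x → traceForm mul x (y + β y) = 0 := fun x hx => by
      have hinv : traceForm mul x (β y) = traceForm mul x y := by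
        simpa only [hx] using traceForm_map_map hβ x y
      rw [traceForm_add_right, hinv, hy x hx, add_zero]
    exact eq_neg_of_add_eq_zero_right <| eq_zero_of_map_eq_self_of_traceForm_eq_zero hrank
      hone (fun a ha => (hdiv a ha).2) hβ hsym horth
  · intro hy x hx
    exact traceForm_eq_zero_of_map_eq_self_of_map_eq_neg hchar hβ hx hy
end

section
/- Let k be any field and let A ∈ 𝒞(k). Then exactly one of the following three alternatives holds: (a) A is not associative; (b) A is associative, non-commutative, and its center equals k·1; (c) A is commutative and associative. Moreover, A is not associative if and only if the right nucleus N_r(A) has dimension 2 over k. -/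
/-
Both parts rest on one dimension count. If `S` is a subspace of the right nucleus that is closed
under products and right inverses, and `u ∉ S`, then `S ∩ u·S = 0`: from `u z ∈ S` with
`0 ≠ z ∈ S` and `z v = 1` one gets `u = (u z) v ∈ S`. Since left multiplication by `u` is
injective, `2 · dim S ≤ dim A`.

Applied to `S = N_r(A)` in a nonassociative `A` this gives `dim N_r(A) ≤ 2`, while
`k·1 ⊊ N_r(A)` gives `dim N_r(A) ≥ 2`. If `A` is associative then `N_r(A) = A` has dimension 4.
Applied to the center `Z` of an associative noncommutative `A`, with `u` not central, equality
`2 · dim Z = 4` would give `A = Z + u Z`, all of whose elements commute with `u`; so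
`dim Z < 2` and `Z = k·1`. The trichotomy itself is then propositional.
-/

open Module Function

variable {k : Type} [Field k]

/-- The right nucleus `N_r(A)` as a `k`-subspace of `A`. -/
def rightNucleusSub {A : Type} [AddCommGroup A] [Module k A]
    (mul : A →ₗ[k] A →ₗ[k] A) : Submodule k A where
  carrier := {z | ∀ x y : A, mul (mul x y) z = mul x (mul y z)}
  add_mem' := by
    intro a b ha hb
    intro x y
    simp only [map_add]
    rw [ha x y, hb x y]
  zero_mem' := by
    intro x y
    simp only [map_zero]
  smul_mem' := by
    intro t z hz
    intro x y
    simp only [map_smul]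
    rw [hz x y]

variable {A : Type} [AddCommGroup A] [Module k A]

def IsUnitalMul (mul : A →ₗ[k] A →ₗ[k] A) (one : A) : Prop :=
  ∀ x : A, mul one x = x ∧ mul x one = x

def IsDivisionMul (mul : A →ₗ[k] A →ₗ[k] A) : Prop :=
  ∀ a : A, a ≠ 0 → Bijective (fun x => mul a x) ∧ Bijective (fun x => mul x a)

def IsAssocMul (mul : A →ₗ[k] A →ₗ[k] A) : Prop :=
  ∀ x y z : A, mul (mul x y) z = mul x (mul y z)

def IsCommMul (mul : A →ₗ[k] A →ₗ[k] A) : Prop :=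
  ∀ x y : A, mul x y = mul y x

def centralizerSub (mul : A →ₗ[k] A →ₗ[k] A) (u : A) : Submodule k A :=
  LinearMap.ker (mul u - mul.flip u)

def centerSub (mul : A →ₗ[k] A →ₗ[k] A) : Submodule k A :=
  ⨅ u, centralizerSub mul u

section

variable {mul : A →ₗ[k] A →ₗ[k] A} {one : A}

theorem mem_centralizerSub {u z : A} : z ∈ centralizerSub mul u ↔ mul u z = mul z u := by
  simp [centralizerSub, sub_eq_zero]

theorem mem_centerSub {z : A} : z ∈ centerSub mul ↔ ∀ x, mul z x = mul x z := by
  simp only [centerSub, Submodule.mem_iInf, mem_centralizerSub, eq_comm]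

theorem coe_centerSub : (centerSub mul : Set A) = {z | ∀ x, mul z x = mul x z} :=
  Set.ext fun _ => mem_centerSub

theorem ne_zero_of_isUnitalMul [Nontrivial A] (hone : IsUnitalMul mul one) : one ≠ 0 := by
  intro h
  obtain ⟨x, hx⟩ := exists_ne (0 : A)
  exact hx (by simpa [h] using ((hone x).2).symm)

theorem rightNucleusSub_eq_top_iff : rightNucleusSub mul = ⊤ ↔ IsAssocMul mul :=
  ⟨fun h x y z => (h ▸ Submodule.mem_top : z ∈ rightNucleusSub mul) x y,
    fun h => Submodule.eq_top_iff'.2 fun z x y => h x y z⟩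

theorem mul_mem_rightNucleusSub {z w : A} (hz : z ∈ rightNucleusSub mul)
    (hw : w ∈ rightNucleusSub mul) : mul z w ∈ rightNucleusSub mul := fun x y =>
  calc mul (mul x y) (mul z w) = mul (mul (mul x y) z) w := (hw _ _).symm
    _ = mul (mul x (mul y z)) w := by rw [hz x y]
    _ = mul x (mul (mul y z) w) := hw _ _
    _ = mul x (mul y (mul z w)) := by rw [hw y z]

theorem exists_mul_eq_one_mem_rightNucleusSub (hone : IsUnitalMul mul one)
    (hdiv : IsDivisionMul mul) {z : A} (hz : z ∈ rightNucleusSub mul) (hz0 : z ≠ 0) :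
    ∃ v ∈ rightNucleusSub mul, mul z v = one := by
  obtain ⟨v, hzv : mul z v = one⟩ := (hdiv z hz0).1.2 one
  have hvz : mul v z = one := (hdiv z hz0).1.1 <| by
    simp only
    rw [(hone z).2, ← hz z v, hzv, (hone z).1]
  refine ⟨v, fun x y => (hdiv z hz0).2.1 ?_, hzv⟩
  -- multiplied on the right by `z`, both sides become `x y`
  simp only
  rw [hz, hvz, (hone _).2, hz, hz, hvz, (hone y).2]

theorem mul_mem_centerSub (hassoc : IsAssocMul mul) {z w : A} (hz : z ∈ centerSub mul)
    (hw : w ∈ centerSub mul) : mul z w ∈ centerSub mul := by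
  rw [mem_centerSub] at *
  intro x
  rw [hassoc, hw, ← hassoc, hz, hassoc]

theorem exists_mul_eq_one_mem_centerSub (hone : IsUnitalMul mul one) (hdiv : IsDivisionMul mul)
    (hassoc : IsAssocMul mul) {z : A} (hz : z ∈ centerSub mul) (hz0 : z ≠ 0) :
    ∃ v ∈ centerSub mul, mul z v = one := by
  obtain ⟨v, hzv : mul z v = one⟩ := (hdiv z hz0).1.2 one
  refine ⟨v, mem_centerSub.2 fun x => (hdiv z hz0).1.1 ?_, hzv⟩
  simp only
  rw [← hassoc, hzv, (hone x).1, ← hassoc, mem_centerSub.1 hz, hassoc, hzv, (hone x).2]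

theorem disjoint_map_mul_left {S : Submodule k A} (hS : S ≤ rightNucleusSub mul)
    (hmul : ∀ z ∈ S, ∀ w ∈ S, mul z w ∈ S)
    (hinv : ∀ z ∈ S, z ≠ 0 → ∃ v ∈ S, mul z v = one) (hone : IsUnitalMul mul one)
    {u : A} (hu : u ∉ S) : Disjoint S (S.map (mul u)) := by
  rw [Submodule.disjoint_def]
  rintro _ hw ⟨z, hz, rfl⟩
  by_contra hz0
  obtain ⟨v, hv, hzv⟩ := hinv z hz (by rintro rfl; simp at hz0)
  have : mul (mul u z) v = u := by rw [hS hv u z, hzv, (hone u).2]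
  exact hu (this ▸ hmul _ hw v hv)

theorem finrank_map_mul_left (hdiv : IsDivisionMul mul) {u : A} (hu : u ≠ 0)
    (S : Submodule k A) : finrank k (S.map (mul u)) = finrank k S :=
  (Submodule.equivMapOfInjective _ (hdiv u hu).1.1 S).finrank_eq.symm

variable [FiniteDimensional k A]

theorem two_mul_finrank_rightNucleusSub_le (hone : IsUnitalMul mul one)
    (hdiv : IsDivisionMul mul) (hna : ¬ IsAssocMul mul) :
    2 * finrank k (rightNucleusSub mul) ≤ finrank k A := by
  obtain ⟨u, hu⟩ : ∃ u, u ∉ rightNucleusSub mul := by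
    simpa [Submodule.eq_top_iff'] using mt rightNucleusSub_eq_top_iff.1 hna
  have hu0 : u ≠ 0 := by rintro rfl; exact hu (Submodule.zero_mem _)
  have := Submodule.finrank_add_finrank_le_of_disjoint <| disjoint_map_mul_left le_rfl
    (fun _ hz _ hw => mul_mem_rightNucleusSub hz hw)
    (fun _ hz hz0 => exists_mul_eq_one_mem_rightNucleusSub hone hdiv hz hz0) hone hu
  rw [finrank_map_mul_left hdiv hu0] at this
  omega

theorem two_le_finrank_rightNucleusSub (hone0 : one ≠ 0)
    (hproper : Set.range (fun s : k => s • one) ⊂ (rightNucleusSub mul : Set A)) :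
    2 ≤ finrank k (rightNucleusSub mul) := by
  rw [← Submodule.span_singleton_eq_range, SetLike.coe_ssubset_coe] at hproper
  have := Submodule.finrank_lt_finrank_of_lt hproper
  rw [finrank_span_singleton hone0] at this
  omega

theorem two_mul_finrank_centerSub_lt (hone : IsUnitalMul mul one) (hdiv : IsDivisionMul mul)
    (hassoc : IsAssocMul mul) (hnc : ¬ IsCommMul mul) :
    2 * finrank k (centerSub mul) < finrank k A := by
  obtain ⟨u, hu⟩ : ∃ u, u ∉ centerSub mul := by
    simp only [mem_centerSub, IsCommMul] at hnc ⊢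
    push Not at hnc ⊢
    exact hnc
  have hu0 : u ≠ 0 := by rintro rfl; exact hu (Submodule.zero_mem _)
  have hdisj := disjoint_map_mul_left
    (fun z _ x y => hassoc x y z)
    (fun _ hz _ hw => mul_mem_centerSub hassoc hz hw)
    (fun _ hz hz0 => exists_mul_eq_one_mem_centerSub hone hdiv hassoc hz hz0) hone hu
  by_contra hge
  have htop := Submodule.eq_top_of_disjoint _ _
    (by rw [finrank_map_mul_left hdiv hu0]; omega) hdisj
  have hcent : centerSub mul ⊔ (centerSub mul).map (mul u) ≤ centralizerSub mul u := by
    refine sup_le (fun z hz => mem_centralizerSub.2 (mem_centerSub.1 hz u).symm) ?_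
    rintro _ ⟨z, hz, rfl⟩
    rw [mem_centralizerSub, hassoc, ← mem_centerSub.1 hz u]
  refine hu (mem_centerSub.2 fun x => ?_)
  exact mem_centralizerSub.1 (hcent (htop ▸ Submodule.mem_top : x ∈ _))

theorem centerSub_eq_span_one (hone : IsUnitalMul mul one) (hdiv : IsDivisionMul mul)
    (hassoc : IsAssocMul mul) (hnc : ¬ IsCommMul mul) (hone0 : one ≠ 0)
    (hA : finrank k A ≤ 4) : centerSub mul = k ∙ one := by
  have hlt := two_mul_finrank_centerSub_lt hone hdiv hassoc hnc
  have hle : k ∙ one ≤ centerSub mul := by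
    rw [Submodule.span_singleton_le_iff_mem, mem_centerSub]
    exact fun x => ((hone x).1.trans (hone x).2.symm)
  refine (Submodule.eq_of_le_of_finrank_le hle ?_).symm
  rw [finrank_span_singleton hone0]
  omega

end

theorem C_trichotomy_general
    (A : Type) [AddCommGroup A] [Module k A] [FiniteDimensional k A]
    (mul : A →ₗ[k] A →ₗ[k] A) (one : A)
    (h4 : finrank k A = 4)
    (hone : ∀ x : A, mul one x = x ∧ mul x one = x)
    (hdiv : ∀ a : A, a ≠ 0 →
      Function.Bijective (fun x => mul a x) ∧ Function.Bijective (fun x => mul x a))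
    (hproper : Set.range (fun s : k => s • one) ⊂ (rightNucleusSub mul : Set A)) :
    (((¬ ∀ x y z : A, mul (mul x y) z = mul x (mul y z)) ∨
      ((∀ x y z : A, mul (mul x y) z = mul x (mul y z)) ∧
        (¬ ∀ x y : A, mul x y = mul y x) ∧
        {z : A | ∀ x : A, mul z x = mul x z} = Set.range (fun s : k => s • one)) ∨
      ((∀ x y : A, mul x y = mul y x) ∧
        (∀ x y z : A, mul (mul x y) z = mul x (mul y z)))) ∧
     ¬((¬ ∀ x y z : A, mul (mul x y) z = mul x (mul y z)) ∧
       ((∀ x y z : A, mul (mul x y) z = mul x (mul y z)) ∧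
         (¬ ∀ x y : A, mul x y = mul y x) ∧
         {z : A | ∀ x : A, mul z x = mul x z} = Set.range (fun s : k => s • one))) ∧
     ¬((¬ ∀ x y z : A, mul (mul x y) z = mul x (mul y z)) ∧
       ((∀ x y : A, mul x y = mul y x) ∧
         (∀ x y z : A, mul (mul x y) z = mul x (mul y z)))) ∧
     ¬(((∀ x y z : A, mul (mul x y) z = mul x (mul y z)) ∧
         (¬ ∀ x y : A, mul x y = mul y x) ∧
         {z : A | ∀ x : A, mul z x = mul x z} = Set.range (fun s : k => s • one)) ∧
       ((∀ x y : A, mul x y = mul y x) ∧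
         (∀ x y z : A, mul (mul x y) z = mul x (mul y z))))) ∧
    ((¬ ∀ x y z : A, mul (mul x y) z = mul x (mul y z)) ↔
      finrank k ↥(rightNucleusSub mul) = 2) := by
  have : Nontrivial A := Module.nontrivial_of_finrank_eq_succ h4
  have hone0 : one ≠ 0 := ne_zero_of_isUnitalMul hone
  have hcenter (hassoc : IsAssocMul mul) (hnc : ¬ IsCommMul mul) :
      {z : A | ∀ x : A, mul z x = mul x z} = Set.range (fun s : k => s • one) := by
    rw [← coe_centerSub, centerSub_eq_span_one hone hdiv hassoc hnc hone0 h4.le,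
      Submodule.span_singleton_eq_range]
  have hnucleus : ¬ IsAssocMul mul ↔ finrank k (rightNucleusSub mul) = 2 := by
    refine ⟨fun hna => ?_, fun h2 hassoc => ?_⟩
    · have := two_mul_finrank_rightNucleusSub_le hone hdiv hna
      have := two_le_finrank_rightNucleusSub hone0 hproper
      omega
    · rw [rightNucleusSub_eq_top_iff.2 hassoc, finrank_top, h4] at h2
      omega
  refine ⟨?_, hnucleus⟩
  by_cases hassoc : IsAssocMul mul
  · by_cases hcomm : IsCommMul mul
    · exact ⟨.inr (.inr ⟨hcomm, hassoc⟩), by tauto⟩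
    · exact ⟨.inr (.inl ⟨hassoc, hcomm, hcenter hassoc hcomm⟩), by tauto⟩
  · exact ⟨.inl hassoc, by tauto⟩

/-- Let `k` be any field and `A ∈ 𝒞(k)`. Then exactly one of the following
holds: (a) `A` is not associative; (b) `A` is associative, non-commutative, with center `k·1`;
(c) `A` is commutative and associative. Moreover, `A` is not associative if and only if the
right nucleus has dimension 2 over `k`. -/
theorem C_trichotomy
    (A : Type) [AddCommGroup A] [Module k A] [FiniteDimensional k A]
    (mul : A →ₗ[k] A →ₗ[k] A) (one : A)
    (h4 : finrank k A = 4)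
    (hone : ∀ x : A, mul one x = x ∧ mul x one = x)
    (hdiv : ∀ a : A, a ≠ 0 →
      Function.Bijective (fun x => mul a x) ∧ Function.Bijective (fun x => mul x a))
    (hproper : Set.range (fun s : k => s • one) ⊂ (rightNucleusSub mul : Set A))
    (hkl : ∃ α β : A ≃ₗ[k] A, IsKleinPair mul α β) :
    (((¬ ∀ x y z : A, mul (mul x y) z = mul x (mul y z)) ∨
      ((∀ x y z : A, mul (mul x y) z = mul x (mul y z)) ∧
        (¬ ∀ x y : A, mul x y = mul y x) ∧
        {z : A | ∀ x : A, mul z x = mul x z} = Set.range (fun s : k => s • one)) ∨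
      ((∀ x y : A, mul x y = mul y x) ∧
        (∀ x y z : A, mul (mul x y) z = mul x (mul y z)))) ∧
     ¬((¬ ∀ x y z : A, mul (mul x y) z = mul x (mul y z)) ∧
       ((∀ x y z : A, mul (mul x y) z = mul x (mul y z)) ∧
         (¬ ∀ x y : A, mul x y = mul y x) ∧
         {z : A | ∀ x : A, mul z x = mul x z} = Set.range (fun s : k => s • one))) ∧
     ¬((¬ ∀ x y z : A, mul (mul x y) z = mul x (mul y z)) ∧
       ((∀ x y : A, mul x y = mul y x) ∧
         (∀ x y z : A, mul (mul x y) z = mul x (mul y z)))) ∧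
     ¬(((∀ x y z : A, mul (mul x y) z = mul x (mul y z)) ∧
         (¬ ∀ x y : A, mul x y = mul y x) ∧
         {z : A | ∀ x : A, mul z x = mul x z} = Set.range (fun s : k => s • one)) ∧
       ((∀ x y : A, mul x y = mul y x) ∧
         (∀ x y z : A, mul (mul x y) z = mul x (mul y z))))) ∧
    ((¬ ∀ x y z : A, mul (mul x y) z = mul x (mul y z)) ↔
      finrank k ↥(rightNucleusSub mul) = 2) :=
  C_trichotomy_general A mul one h4 hone hdiv hproper
end

section
/- Let k be a field of characteristic ≠ 2 and ℓ/k a quadratic field extension with nontrivial k-automorphism σ. Then: (i) for c₃ ∈ k, the triple (1, 0, c₃) is ℓ-admissible if and only if c₃ ≠ 0 and c₃ ≠ x·σ(x) for every nonzero x ∈ ℓ; (ii) for c₂ ∈ k, the triple (0, c₂, 0) is ℓ-admissible if and only if c₂ ≠ 0 and c₂ is not the square of any element of ℓ. -/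
open Module Function

variable {k ℓ : Type}

/-- A solution `(x, y)` with `y ≠ 0` gives `a = N (x / y)`. -/
theorem MonoidWithZeroHom.forall_eq_mul_imp_eq_zero_iff {G₀ H₀ : Type*} [GroupWithZero G₀]
    [GroupWithZero H₀] (N : G₀ →*₀ H₀) (a : H₀) :
    (∀ x y, N x = a * N y → x = 0 ∧ y = 0) ↔ a ≠ 0 ∧ ∀ x, x ≠ 0 → N x ≠ a := by
  constructor
  · intro h
    refine ⟨fun ha => one_ne_zero (h 0 1 (by simp [ha])).2, fun x hx hNx => ?_⟩
    exact hx (h x 1 (by simp [hNx])).1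
  · rintro ⟨ha, hN⟩ x y hxy
    by_cases hy : y = 0
    · subst hy
      simpa using hxy
    · have hx : x ≠ 0 := by
        rintro rfl
        exact mul_ne_zero ha ((map_ne_zero N).2 hy) (by simpa using hxy.symm)
      refine absurd ?_ (hN (x / y) (div_ne_zero hx hy))
      rw [map_div₀, div_eq_iff ((map_ne_zero N).2 hy), hxy]

/-- `x ↦ x σ(x)`, the norm map when `σ` generates the Galois group of a quadratic extension. -/
def mulSelfApplyHom {M F : Type*} [CommMonoidWithZero M] [FunLike F M M]
    [MonoidWithZeroHomClass F M M] (σ : F) : M →*₀ M where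
  toFun x := x * σ x
  map_zero' := by simp
  map_one' := by simp
  map_mul' x y := by rw [map_mul, mul_mul_mul_comm]

section

variable [Field k] [Field ℓ] [Algebra k ℓ] (σ : ℓ ≃ₐ[k] ℓ)

theorem isAdmissibleTriple_one_zero_iff (c : k) :
    IsAdmissibleTriple σ (1, 0, c) ↔
      ∀ x y, mulSelfApplyHom σ x = algebraMap k ℓ c * mulSelfApplyHom σ y → x = 0 ∧ y = 0 := by
  refine forall₂_congr fun x y => imp_congr_left ?_
  simp [qc, mulSelfApplyHom, sub_eq_zero]

theorem isAdmissibleTriple_zero_zero_iff (c : k) :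
    IsAdmissibleTriple σ (0, c, 0) ↔
      ∀ x y, powMonoidWithZeroHom two_ne_zero x = algebraMap k ℓ c *
        powMonoidWithZeroHom two_ne_zero y → x = 0 ∧ y = 0 := by
  refine forall₂_congr fun x y => imp_congr_left ?_
  simp [qc, sub_eq_zero]

end

theorem admissible_S_and_K_general [Field k] [Field ℓ] [Algebra k ℓ]
    (σ : ℓ ≃ₐ[k] ℓ) :
    (∀ c₃ : k, IsAdmissibleTriple σ ((1 : k), (0 : k), c₃) ↔
      (c₃ ≠ 0 ∧ ∀ x : ℓ, x ≠ 0 → algebraMap k ℓ c₃ ≠ x * σ x)) ∧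
    (∀ c₂ : k, IsAdmissibleTriple σ ((0 : k), c₂, (0 : k)) ↔
      (c₂ ≠ 0 ∧ ∀ x : ℓ, x ^ 2 ≠ algebraMap k ℓ c₂)) := by
  refine ⟨fun c₃ => ?_, fun c₂ => ?_⟩
  · rw [isAdmissibleTriple_one_zero_iff, MonoidWithZeroHom.forall_eq_mul_imp_eq_zero_iff,
      map_ne_zero_iff _ (algebraMap k ℓ).injective]
    simp only [mulSelfApplyHom, MonoidWithZeroHom.coe_mk, ZeroHom.coe_mk, ne_comm]
  · rw [isAdmissibleTriple_zero_zero_iff, MonoidWithZeroHom.forall_eq_mul_imp_eq_zero_iff,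
      map_ne_zero_iff _ (algebraMap k ℓ).injective]
    simp only [powMonoidWithZeroHom_apply]
    refine and_congr_right fun hc => ⟨fun h x => ?_, fun h x _ => h x⟩
    rcases eq_or_ne x 0 with rfl | hx
    · simpa [eq_comm] using (map_ne_zero_iff _ (algebraMap k ℓ).injective).2 hc
    · exact h x hx

/-- Let `k` be a field of characteristic ≠ 2 and `ℓ/k` a quadratic field
extension with nontrivial `k`-automorphism `σ`. Then:
(i) for `c₃ ∈ k`, the triple `(1, 0, c₃)` is `ℓ`-admissible iff `c₃ ≠ 0` and `c₃` is not a
norm `x·σ(x)` of any nonzero `x ∈ ℓ`;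
(ii) for `c₂ ∈ k`, the triple `(0, c₂, 0)` is `ℓ`-admissible iff `c₂ ≠ 0` and `c₂` is not a
square in `ℓ`. -/
theorem admissible_S_and_K [Field k] [Field ℓ] [Algebra k ℓ]
    (hchar : (2 : k) ≠ 0) (hquad : finrank k ℓ = 2)
    (σ : ℓ ≃ₐ[k] ℓ) (hσ : ∃ x : ℓ, σ x ≠ x) :
    (∀ c₃ : k, IsAdmissibleTriple σ ((1 : k), (0 : k), c₃) ↔
      (c₃ ≠ 0 ∧ ∀ x : ℓ, x ≠ 0 → algebraMap k ℓ c₃ ≠ x * σ x)) ∧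
    (∀ c₂ : k, IsAdmissibleTriple σ ((0 : k), c₂, (0 : k)) ↔
      (c₂ ≠ 0 ∧ ∀ x : ℓ, x ^ 2 ≠ algebraMap k ℓ c₂)) :=
  admissible_S_and_K_general σ
end

section
/- Let k be a field of characteristic ≠ 2 such that the quotient group k*/(k*)² has order 2 (k has a unique quadratic extension class). Then there exists no Galois field extension K/k of degree 4 whose Galois group is isomorphic to Klein's four-group; consequently, no A ∈ 𝒞(k) is commutative. -/
/-!
Let `(α, β)` be a Kleinian pair of a commutative `A` without zero divisors. Splitting vectors
along the signs of `α` and `β` produces nonzero `u`, `v` with `(α u, β u) = (u, -u)` and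
`(α v, β v) = (-v, v)`; then `1, u, v, uv` lie in the four joint eigenspaces, so they form a basis
of the 4-dimensional `A` and the common fixed vectors are the scalars. Hence `u² = a`, `v² = b`
with `a, b ∈ k`, and neither is a square (a square root `e` would give `(u - e)(u + e) = 0`).
Since `k*/(k*)²` has order 2, `ab = d²`, so `(bu)² = (dv)²` and commutativity gives
`(bu - dv)(bu + dv) = 0`, i.e. `bu = ±dv`, which `β` tells apart. A Galois extension with group
`V₄` is such an algebra, its Galois group supplying the Kleinian pair.
-/

open Module Function

variable {k : Type} [Field k]

theorem isSquare_mul_of_not_isSquare (hidx : ((powMonoidHom 2 : kˣ →* kˣ).range).index = 2)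
    {a b : k} (ha : ¬IsSquare a) (hb : ¬IsSquare b) : IsSquare (a * b) := by
  have isSquare_of_mem {x : kˣ} : x ∈ (powMonoidHom 2 : kˣ →* kˣ).range → IsSquare (x : k) :=
    fun ⟨c, hc⟩ => ⟨c, by rw [← hc, powMonoidHom_apply, Units.val_pow_eq_pow_val, sq]⟩
  have ha0 : a ≠ 0 := by rintro rfl; exact ha ⟨0, by simp⟩
  have hb0 : b ≠ 0 := by rintro rfl; exact hb ⟨0, by simp⟩
  have hab : Units.mk0 a ha0 * Units.mk0 b hb0 ∈ (powMonoidHom 2 : kˣ →* kˣ).range :=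
    (Subgroup.mul_mem_iff_of_index_two hidx).2
      (iff_of_false (fun h => ha (isSquare_of_mem h)) (fun h => hb (isSquare_of_mem h)))
  simpa using isSquare_of_mem hab

section JointEigenvectors

variable {A : Type} [AddCommGroup A] [Module k A] {F : Type} [FunLike F A A]

theorem eq_zero_of_eq_neg (h2 : (2 : k) ≠ 0) {x : A} (h : x = -x) : x = 0 := by
  rw [eq_neg_iff_add_eq_zero, ← two_smul k] at h
  exact (smul_eq_zero.1 h).resolve_left h2

theorem exists_neg_eigenvector [AddMonoidHomClass F A A] {G : Type} [FunLike G A A]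
    [AddMonoidHomClass G A A] (σ : F) (τ : G) (hσ : ∀ x, σ (σ x) = x) (hτ : ∀ x, τ (τ x) = x)
    (hστ : ∀ x, σ (τ x) = τ (σ x)) {x : A} (hx : σ x ≠ x) :
    ∃ y, y ≠ 0 ∧ σ y = -y ∧ (τ y = y ∨ τ y = -y) := by
  set y := x - σ x
  have hy0 : y ≠ 0 := sub_ne_zero.2 hx.symm
  have hσy : σ y = -y := by simp [y, hσ]
  by_cases hτy : y + τ y = 0
  · exact ⟨y, hy0, hσy, .inr (eq_neg_of_add_eq_zero_right hτy)⟩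
  · refine ⟨y + τ y, hτy, ?_, .inl ?_⟩
    · rw [map_add, hστ, hσy, map_neg, neg_add]
    · rw [map_add, hτ, add_comm]

theorem eq_zero_of_add_eq_zero_of_eigen [AddMonoidHomClass F A A] (h2 : (2 : k) ≠ 0) (α β : F)
    {x₁ x₂ x₃ x₄ : A} (h₁ : α x₁ = x₁ ∧ β x₁ = x₁) (h₂ : α x₂ = x₂ ∧ β x₂ = -x₂)
    (h₃ : α x₃ = -x₃ ∧ β x₃ = x₃) (h₄ : α x₄ = -x₄ ∧ β x₄ = -x₄) (h : x₁ + x₂ + x₃ + x₄ = 0) :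
    x₁ = 0 ∧ x₂ = 0 ∧ x₃ = 0 ∧ x₄ = 0 := by
  have hα : x₁ + x₂ - x₃ - x₄ = 0 := by
    simpa [h₁.1, h₂.1, h₃.1, h₄.1, ← sub_eq_add_neg] using congrArg α h
  have hβ : x₁ - x₂ + x₃ - x₄ = 0 := by
    simpa [h₁.2, h₂.2, h₃.2, h₄.2, ← sub_eq_add_neg] using congrArg β h
  have hαβ : x₁ - x₂ - x₃ + x₄ = 0 := by
    simpa [h₁, h₂, h₃, h₄, ← sub_eq_add_neg] using congrArg (α ∘ β) h
  have h4 : (4 : k) ≠ 0 := by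
    rw [show (4 : k) = 2 * 2 by norm_num]; exact mul_ne_zero h2 h2
  have of_four_smul : ∀ y : A, (4 : k) • y = 0 → y = 0 :=
    fun y hy => (smul_eq_zero.1 hy).resolve_left h4
  refine ⟨of_four_smul _ ?_, of_four_smul _ ?_, of_four_smul _ ?_, of_four_smul _ ?_⟩
  · linear_combination (norm := module) h + hα + hβ + hαβ
  · linear_combination (norm := module) h + hα - hβ - hαβ
  · linear_combination (norm := module) h - hα + hβ - hαβ
  · linear_combination (norm := module) h - hα - hβ + hαβ

theorem linearIndependent_of_eigen [LinearMapClass F k A A] (h2 : (2 : k) ≠ 0) (α β : F)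
    {x₁ x₂ x₃ x₄ : A} (h₁ : α x₁ = x₁ ∧ β x₁ = x₁) (h₂ : α x₂ = x₂ ∧ β x₂ = -x₂)
    (h₃ : α x₃ = -x₃ ∧ β x₃ = x₃) (h₄ : α x₄ = -x₄ ∧ β x₄ = -x₄)
    (hx₁ : x₁ ≠ 0) (hx₂ : x₂ ≠ 0) (hx₃ : x₃ ≠ 0) (hx₄ : x₄ ≠ 0) :
    LinearIndependent k ![x₁, x₂, x₃, x₄] := by
  rw [Fintype.linearIndependent_iff]
  intro c hc
  simp only [Fin.sum_univ_four, Matrix.cons_val] at hc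
  obtain ⟨e₁, e₂, e₃, e₄⟩ := eq_zero_of_add_eq_zero_of_eigen h2 α β
    (by simp [h₁]) (by simp [h₂]) (by simp [h₃]) (by simp [h₄]) hc
  intro i
  fin_cases i
  exacts [(smul_eq_zero.1 e₁).resolve_right hx₁, (smul_eq_zero.1 e₂).resolve_right hx₂,
    (smul_eq_zero.1 e₃).resolve_right hx₃, (smul_eq_zero.1 e₄).resolve_right hx₄]

theorem exists_eq_smul_of_eigen [LinearMapClass F k A A] (h2 : (2 : k) ≠ 0)
    (h4 : finrank k A = 4) (α β : F)
    {x₁ x₂ x₃ x₄ : A} (h₁ : α x₁ = x₁ ∧ β x₁ = x₁) (h₂ : α x₂ = x₂ ∧ β x₂ = -x₂)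
    (h₃ : α x₃ = -x₃ ∧ β x₃ = x₃) (h₄ : α x₄ = -x₄ ∧ β x₄ = -x₄)
    (hx₁ : x₁ ≠ 0) (hx₂ : x₂ ≠ 0) (hx₃ : x₃ ≠ 0) (hx₄ : x₄ ≠ 0)
    {z : A} (hz : α z = z ∧ β z = z) : ∃ c : k, z = c • x₁ := by
  have hspan := (linearIndependent_of_eigen h2 α β h₁ h₂ h₃ h₄ hx₁ hx₂ hx₃ hx₄
    ).span_eq_top_of_card_eq_finrank (by simp [h4])
  obtain ⟨c, hc⟩ :=
    (Submodule.mem_span_range_iff_exists_fun k).1 (hspan ▸ Submodule.mem_top (x := z))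
  simp only [Fin.sum_univ_four, Matrix.cons_val] at hc
  have hsum : (c 0 • x₁ - z) + c 1 • x₂ + c 2 • x₃ + c 3 • x₄ = 0 := by
    rw [← hc]; abel
  obtain ⟨e₁, -⟩ := eq_zero_of_add_eq_zero_of_eigen h2 α β
    (by simp [h₁, hz]) (by simp [h₂]) (by simp [h₃]) (by simp [h₄]) hsum
  exact ⟨c 0, (sub_eq_zero.1 e₁).symm⟩

end JointEigenvectors

section UnitalAlgebra

variable {A : Type} [AddCommGroup A] [Module k A] {mul : A →ₗ[k] A →ₗ[k] A} {F : Type}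
  [FunLike F A A]

theorem map_one_of_involutive {one : A} (hone : ∀ x, mul one x = x ∧ mul x one = x)
    (σ : F) (hσm : ∀ x y, σ (mul x y) = mul (σ x) (σ y)) (hσ : ∀ x, σ (σ x) = x) :
    σ one = one := by
  calc σ one = mul (σ one) (σ (σ one)) := by rw [hσ, (hone _).2]
    _ = one := by rw [← hσm, (hone _).1, hσ]

theorem eq_zero_of_mul_self_eq [AddMonoidHomClass F A A] (h2 : (2 : k) ≠ 0)
    (hzd : ∀ x y, mul x y = 0 → x = 0 ∨ y = 0) (σ : F) {x y : A} (hxy : mul x y = mul y x)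
    (hsq : mul x x = mul y y) (hx : σ x = -x) (hy : σ y = y) : x = 0 := by
  have hfac : mul (x - y) (x + y) = 0 := by
    simp only [map_sub, map_add, LinearMap.sub_apply, hxy, hsq]; abel
  apply eq_zero_of_eq_neg h2
  obtain rfl | rfl : x = y ∨ x = -y :=
    (hzd _ _ hfac).imp sub_eq_zero.1 eq_neg_of_add_eq_zero_left
  · rwa [hy] at hx
  · rwa [map_neg, hy] at hx

theorem not_isSquare_of_mul_self_eq_smul_one [LinearMapClass F k A A] (h2 : (2 : k) ≠ 0)
    {one : A} (hone : ∀ x, mul one x = x ∧ mul x one = x) (hzd : ∀ x y, mul x y = 0 → x = 0 ∨ y = 0)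
    (σ : F) (hσ1 : σ one = one) {x : A} (hx0 : x ≠ 0) (hσx : σ x = -x) {a : k}
    (hxx : mul x x = a • one) : ¬IsSquare a := by
  rintro ⟨e, rfl⟩
  refine hx0 (eq_zero_of_mul_self_eq h2 hzd σ (y := e • one) ?_ ?_ hσx (by rw [map_smul, hσ1]))
  · simp only [map_smul, LinearMap.smul_apply, (hone x).1, (hone x).2]
  · simp only [map_smul, LinearMap.smul_apply, hxx, (hone one).1, smul_smul]

theorem exists_eigen_pos_neg [AddMonoidHomClass F A A]
    (hzd : ∀ x y, mul x y = 0 → x = 0 ∨ y = 0) (α β : F)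
    (hαm : ∀ x y, α (mul x y) = mul (α x) (α y)) (hβm : ∀ x y, β (mul x y) = mul (β x) (β y))
    (hα : ∀ x, α (α x) = x) (hβ : ∀ x, β (β x) = x) (hαβ : ∀ x, α (β x) = β (α x))
    (hβ1 : ∃ x, β x ≠ x) (hne : ∃ x, α x ≠ β x) : ∃ u, u ≠ 0 ∧ α u = u ∧ β u = -u := by
  obtain ⟨x, hx⟩ := hβ1
  obtain ⟨y, hy0, hβy, hαy | hαy⟩ := exists_neg_eigenvector β α hβ hα (fun x => (hαβ x).symm) hx
  · exact ⟨y, hy0, hαy, hβy⟩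
  obtain ⟨x', hx'⟩ := hne
  have hαβx' : α (β x') ≠ x' := fun h => hx' (by rw [← hα (β x'), h])
  obtain ⟨z, hz0, hαβz, hαz | hαz⟩ := exists_neg_eigenvector ((α : A →+ A).comp β) α
    (fun x => by simp [hαβ, hα, hβ]) hα (fun x => by simp [hαβ]) (by simpa using hαβx')
  all_goals simp only [AddMonoidHom.comp_apply, AddMonoidHom.coe_coe] at hαβz
  · exact ⟨z, hz0, hαz, by rw [← hα (β z), hαβz, map_neg, hαz]⟩
  · have hβz : β z = z := by rw [← hα (β z), hαβz, map_neg, hαz, neg_neg]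
    refine ⟨mul z y, fun h => (hzd _ _ h).elim hz0 hy0, ?_, ?_⟩
    · simp [hαm, hαz, hαy]
    · rw [hβm, hβz, hβy, map_neg]

theorem not_forall_mul_comm_of_isKleinPair (h2 : (2 : k) ≠ 0)
    (hidx : ((powMonoidHom 2 : kˣ →* kˣ).range).index = 2) (h4 : finrank k A = 4) {one : A}
    (hone : ∀ x, mul one x = x ∧ mul x one = x) (hzd : ∀ x y, mul x y = 0 → x = 0 ∨ y = 0)
    {α β : A ≃ₗ[k] A} (hpair : IsKleinPair mul α β) : ¬∀ x y, mul x y = mul y x := by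
  intro hcomm
  obtain ⟨hαm, hβm, hα, hβ, hαβ, hα1, hβ1, hne⟩ := hpair
  obtain ⟨u, hu0, hαu, hβu⟩ := exists_eigen_pos_neg hzd α β hαm hβm
    hα hβ hαβ (DFunLike.ne_iff.1 hβ1) (DFunLike.ne_iff.1 hne)
  obtain ⟨v, hv0, hβv, hαv⟩ := exists_eigen_pos_neg hzd β α hβm hαm
    hβ hα (fun x => (hαβ x).symm) (DFunLike.ne_iff.1 hα1) (DFunLike.ne_iff.1 hne.symm)
  have hαone := map_one_of_involutive hone α hαm hα
  have hβone := map_one_of_involutive hone β hβm hβ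
  have hone0 : one ≠ 0 := fun h => hu0 (by rw [← (hone u).1, h, map_zero, LinearMap.zero_apply])
  have huv0 : mul u v ≠ 0 := fun h => (hzd _ _ h).elim hu0 hv0
  have fixed_eq_smul_one : ∀ z, α z = z ∧ β z = z → ∃ c : k, z = c • one :=
    fun z hz => exists_eq_smul_of_eigen h2 h4 α β
      (x₂ := u) (x₃ := v) (x₄ := mul u v) ⟨hαone, hβone⟩ ⟨hαu, hβu⟩ ⟨hαv, hβv⟩
      ⟨by simp [hαm, hαu, hαv], by simp [hβm, hβu, hβv]⟩ hone0 hu0 hv0 huv0 hz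
  obtain ⟨a, ha⟩ := fixed_eq_smul_one (mul u u) ⟨by rw [hαm, hαu], by simp [hβm, hβu]⟩
  obtain ⟨b, hb⟩ := fixed_eq_smul_one (mul v v) ⟨by simp [hαm, hαv], by rw [hβm, hβv]⟩
  have hna := not_isSquare_of_mul_self_eq_smul_one h2 hone hzd β hβone hu0 hβu ha
  have hnb := not_isSquare_of_mul_self_eq_smul_one h2 hone hzd α hαone hv0 hαv hb
  obtain ⟨d, hd⟩ := isSquare_mul_of_not_isSquare hidx hna hnb
  have hbu : b • u = 0 := eq_zero_of_mul_self_eq h2 hzd β (y := d • v)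
    (by simp only [map_smul, LinearMap.smul_apply, hcomm u v, smul_comm b d])
    (by simp only [map_smul, LinearMap.smul_apply, ha, hb, smul_smul]; congr 1
        linear_combination b * hd)
    (by simp [hβu]) (by simp [hβv])
  exact (smul_eq_zero.1 hbu).elim (fun hb0 => hnb (hb0 ▸ IsSquare.zero)) hu0

end UnitalAlgebra

theorem exists_klein_generators {G : Type} [Group G]
    (e : G ≃* Multiplicative (ZMod 2 × ZMod 2)) :
    ∃ a b : G, a * a = 1 ∧ b * b = 1 ∧ a * b = b * a ∧ a ≠ 1 ∧ b ≠ 1 ∧ a ≠ b := by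
  refine ⟨e.symm (.ofAdd (1, 0)), e.symm (.ofAdd (0, 1)), ?_, ?_, ?_, ?_, ?_, ?_⟩ <;>
    simp only [← map_mul, ne_eq, map_eq_one_iff _ e.symm.injective, e.symm.injective.eq_iff] <;>
    decide

theorem exists_isKleinPair_of_mulEquiv {K : Type} [Field K] [Algebra k K]
    (e : (K ≃ₐ[k] K) ≃* Multiplicative (ZMod 2 × ZMod 2)) :
    ∃ α β : K ≃ₗ[k] K, IsKleinPair (LinearMap.mul k K) α β := by
  obtain ⟨a, b, ha, hb, hab, ha1, hb1, hne⟩ := exists_klein_generators e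
  have toLinearEquiv_ne {σ τ : K ≃ₐ[k] K} (h : σ ≠ τ) : σ.toLinearEquiv ≠ τ.toLinearEquiv :=
    AlgEquiv.toLinearEquiv_injective.ne h
  refine ⟨a.toLinearEquiv, b.toLinearEquiv, fun x y => by simp, fun x y => by simp,
    fun x => by simpa using DFunLike.congr_fun ha x,
    fun x => by simpa using DFunLike.congr_fun hb x,
    fun x => by simpa using DFunLike.congr_fun hab x, toLinearEquiv_ne ha1, toLinearEquiv_ne hb1,
    toLinearEquiv_ne hne⟩

/-- Let `k` be a field of characteristic ≠ 2 such that `k*/(k*)²` has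
order 2. Then there is no Galois field extension `K/k` of degree 4 whose Galois group is
Klein's four-group; consequently, no `A ∈ 𝒞(k)` is commutative. -/
theorem no_klein_galois_extension (hchar : (2 : k) ≠ 0)
    (hidx : ((powMonoidHom 2 : kˣ →* kˣ).range).index = 2) :
    (∀ (K : Type) [Field K] [Algebra k K] [FiniteDimensional k K],
      IsGalois k K → finrank k K = 4 →
      IsEmpty ((K ≃ₐ[k] K) ≃* Multiplicative (ZMod 2 × ZMod 2))) ∧
    (∀ (A : Type) [AddCommGroup A] [Module k A] [FiniteDimensional k A]
      (mul : A →ₗ[k] A →ₗ[k] A) (one : A),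
      finrank k A = 4 →
      (∀ x : A, mul one x = x ∧ mul x one = x) →
      (∀ a : A, a ≠ 0 →
        Function.Bijective (fun x => mul a x) ∧ Function.Bijective (fun x => mul x a)) →
      Set.range (fun s : k => s • one) ⊂
        {z : A | ∀ x y : A, mul (mul x y) z = mul x (mul y z)} →
      (∃ α β : A ≃ₗ[k] A, IsKleinPair mul α β) →
      ¬ ∀ x y : A, mul x y = mul y x) := by
  refine ⟨fun K _ _ _ _ h4 => ⟨fun e => ?_⟩,
    fun A _ _ _ mul one h4 hone hdiv _ ⟨α, β, hpair⟩ => ?_⟩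
  · obtain ⟨α, β, hpair⟩ := exists_isKleinPair_of_mulEquiv e
    exact not_forall_mul_comm_of_isKleinPair hchar hidx h4 (one := 1)
      (fun x => by simp) (fun x y => by simp) hpair (fun x y => by simp [mul_comm])
  · exact not_forall_mul_comm_of_isKleinPair hchar hidx h4 hone
      (fun x y h => or_iff_not_imp_left.2 fun hx => (hdiv x hx).1.injective (by simpa using h))
      hpair
end
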